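/- arXiv:1209.0444 — 4 statements merged into one kernel-verified Lean document; each statement's English description precedes it below -/
import Mathlib

section
/- Let T̄ > 0 and, for each i ∈ {1,…,N}, let F_i be a real n×n matrix, U_i a real n×p matrix and V_i a real q×n matrix; set 𝒜_i = { F_i + U_i Δ V_i : Δ ∈ ℝ^{p×q}, ‖Δ‖₂ ≤ 1 }. Suppose there exist a scalar ε > 0, scalars μ_i > 0, symmetric positive definite n×n matrices P_1, …, P_N, continuous nonnegative scalar functions μ_{ij} : [0, T̄] → ℝ₊, and continuously differentiable symmetric 3n×3n matrix functions Z_{ij} : [0, T̄] → S^{3n} (i ≠ j) satisfying the looping condition Y_2^T Z_{ij}(T̄) Y_2 − Y_1^T Z_{ij}(0) Y_1 = 0, such that: (i) for every i, the (n+p)×(n+p) block matrix [F_i^T P_i + P_i F_i + μ_i V_i^T V_i, P_i U_i; U_i^T P_i, −μ_i I_p] ≺ 0; and (ii) for all i ≠ j and all τ ∈ [0, T̄], the (3n+p)×(3n+p) block matrix [Ξ_{ij}(τ), W_{ij}(τ); W_{ij}(τ)^T, −μ_{ij}(τ) I_p] ⪯ 0, where Ξ_{ij}(τ) = Ψ_{ij}(T̄)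 + He(Z_{ij}(τ) D_n(F_i)) + D_n(μ_{ij}(τ) V_i^T V_i) + Z_{ij}'(τ) (Ψ_{ij}(T̄) built from F_i), and W_{ij}(τ) is the 3n×p matrix obtained by stacking (Z_{ij}^{11}(τ) + T̄ P_i) U_i, Z_{ij}^{21}(τ) U_i and Z_{ij}^{31}(τ) U_i, with Z_{ij}^{kℓ}(τ) the (k,ℓ) n×n block of Z_{ij}(τ). Then for every choice of matrices A_i ∈ 𝒜_i, i = 1,…,N, the conditions A_i^T P_i + P_i A_i ≺ 0 and exp(A_i^T T̄) P_i exp(A_i T̄) − P_j ≺ 0 (i ≠ j) hold, and consequently the switched system ẋ = A_{σ(t)} x is globally asymptotically stable over the class of switching sequences with t_{k+1} − t_k ≥ T̄. -/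
open Matrix Filter Topology

/-- `Y₁ = [Iₙ 0; Iₙ 0; 0 Iₙ]`. -/
def Y1 (n : ℕ) : Matrix (Fin n ⊕ (Fin n ⊕ Fin n)) (Fin n ⊕ Fin n) ℝ :=
  Matrix.fromBlocks 1 0 (Matrix.fromRows 1 0) (Matrix.fromRows 0 1)

/-- `Y₂ = [0 Iₙ; Iₙ 0; 0 Iₙ]`. -/
def Y2 (n : ℕ) : Matrix (Fin n ⊕ (Fin n ⊕ Fin n)) (Fin n ⊕ Fin n) ℝ :=
  Matrix.fromBlocks 0 1 (Matrix.fromRows 1 0) (Matrix.fromRows 0 1)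

/-- `Dₙ(M) = diag(M, 0ₙ, 0ₙ)`. -/
def Dn {n : ℕ} (M : Matrix (Fin n) (Fin n) ℝ) :
    Matrix (Fin n ⊕ (Fin n ⊕ Fin n)) (Fin n ⊕ (Fin n ⊕ Fin n)) ℝ :=
  Matrix.fromBlocks M 0 0 0

/-- `He(M) = M + Mᵀ`. -/
def He {m : Type*} (M : Matrix m m ℝ) : Matrix m m ℝ := M + Mᵀ

/-- `Ψᵢⱼ(T) = diag(T(Aᵢᵀ Pᵢ + Pᵢ Aᵢ), Pᵢ − Pⱼ + ε Iₙ, 0ₙ)`. -/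
def Psi {n : ℕ} (T ε : ℝ) (Ai Pi Pj : Matrix (Fin n) (Fin n) ℝ) :
    Matrix (Fin n ⊕ (Fin n ⊕ Fin n)) (Fin n ⊕ (Fin n ⊕ Fin n)) ℝ :=
  Matrix.fromBlocks (T • (Aiᵀ * Pi + Pi * Ai)) 0 0
    (Matrix.fromBlocks (Pi - Pj + ε • (1 : Matrix (Fin n) (Fin n) ℝ)) 0 0 0)

/-- The `(1,1)` `n×n` block of a `3n×3n` matrix. -/
def blk11 {n : ℕ} (Z : Matrix (Fin n ⊕ (Fin n ⊕ Fin n)) (Fin n ⊕ (Fin n ⊕ Fin n)) ℝ) :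
    Matrix (Fin n) (Fin n) ℝ := Matrix.of fun a b => Z (Sum.inl a) (Sum.inl b)

/-- The `(2,1)` `n×n` block of a `3n×3n` matrix. -/
def blk21 {n : ℕ} (Z : Matrix (Fin n ⊕ (Fin n ⊕ Fin n)) (Fin n ⊕ (Fin n ⊕ Fin n)) ℝ) :
    Matrix (Fin n) (Fin n) ℝ := Matrix.of fun a b => Z (Sum.inr (Sum.inl a)) (Sum.inl b)

/-- The `(3,1)` `n×n` block of a `3n×3n` matrix. -/
def blk31 {n : ℕ} (Z : Matrix (Fin n ⊕ (Fin n ⊕ Fin n)) (Fin n ⊕ (Fin n ⊕ Fin n)) ℝ) :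
    Matrix (Fin n) (Fin n) ℝ := Matrix.of fun a b => Z (Sum.inr (Sum.inr a)) (Sum.inl b)

/-- Spectral norm at most one: `‖Δ v‖₂ ≤ ‖v‖₂` for all `v`. -/
def SpecNormLEOne {p q : ℕ} (Δ : Matrix (Fin p) (Fin q) ℝ) : Prop :=
  ∀ v : Fin q → ℝ, (Δ *ᵥ v) ⬝ᵥ (Δ *ᵥ v) ≤ v ⬝ᵥ v

lemma dot_transpose_mulVec {m n : Type*} [Fintype m] [Fintype n]
    (A : Matrix m n ℝ) (x : n → ℝ) (u : m → ℝ) :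
    x ⬝ᵥ (Aᵀ *ᵥ u) = (A *ᵥ x) ⬝ᵥ u := by
  simp only [dotProduct, Matrix.mulVec, Matrix.transpose_apply, Finset.mul_sum, Finset.sum_mul]
  rw [Finset.sum_comm]
  apply Finset.sum_congr rfl; intro i _; apply Finset.sum_congr rfl; intro j _; ring

lemma quad_fromBlocks {m p : Type*} [Fintype m] [Fintype p]
    (A : Matrix m m ℝ) (B : Matrix m p ℝ) (C : Matrix p m ℝ) (D : Matrix p p ℝ)
    (x : m → ℝ) (w : p → ℝ) :
    (Sum.elim x w) ⬝ᵥ (Matrix.fromBlocks A B C D *ᵥ Sum.elim x w)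
      = x ⬝ᵥ (A *ᵥ x) + x ⬝ᵥ (B *ᵥ w) + (w ⬝ᵥ (C *ᵥ x) + w ⬝ᵥ (D *ᵥ w)) := by
  rw [Matrix.fromBlocks_mulVec, sumElim_dotProduct_sumElim, dotProduct_add,
    dotProduct_add]
  simp

lemma real_posdef_lt {n : Type*} [Fintype n] {M : Matrix n n ℝ} (hM : (-M).PosDef)
    {v : n → ℝ} (hv : v ≠ 0) : v ⬝ᵥ (M *ᵥ v) < 0 := by
  have := hM.dotProduct_mulVec_pos hv
  simp only [star_trivial, Matrix.neg_mulVec, dotProduct_neg] at this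
  linarith


lemma part1 {n p q : ℕ} (F : Matrix (Fin n) (Fin n) ℝ) (U : Matrix (Fin n) (Fin p) ℝ)
    (Vm : Matrix (Fin q) (Fin n) ℝ) (μ : ℝ) (hμ : 0 < μ) (P : Matrix (Fin n) (Fin n) ℝ)
    (hP : P.IsSymm)
    (hLMI : (-(Matrix.fromBlocks (Fᵀ * P + P * F + μ • (Vmᵀ * Vm)) (P * U)
        (Uᵀ * P) (-(μ • (1 : Matrix (Fin p) (Fin p) ℝ))))).PosDef)
    (Δ : Matrix (Fin p) (Fin q) ℝ) (hΔ : SpecNormLEOne Δ) :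
    (-((F + U * Δ * Vm)ᵀ * P + P * (F + U * Δ * Vm))).PosDef := by
  set A := F + U * Δ * Vm with hA
  refine Matrix.PosDef.of_dotProduct_mulVec_pos ?_ ?_
  · -- Hermitian
    have : (Aᵀ * P + P * A).IsSymm := by
      rw [Matrix.IsSymm, Matrix.transpose_add, Matrix.transpose_mul, Matrix.transpose_mul,
        Matrix.transpose_transpose, hP.eq, add_comm]
    rw [Matrix.IsHermitian]
    ext i j
    simp only [Matrix.conjTranspose_apply, Matrix.neg_apply, star_trivial]
    have := congrFun (congrFun this.eq i) j
    simp only [Matrix.transpose_apply] at this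
    rw [← this]
  · intro x hx
    simp only [star_trivial, Matrix.neg_mulVec, dotProduct_neg]
    have hquad : x ⬝ᵥ ((Aᵀ * P + P * A) *ᵥ x) < 0 := by
      set w : Fin p → ℝ := Δ *ᵥ (Vm *ᵥ x) with hw
      have hz : Sum.elim x w ≠ 0 := by
        intro h
        apply hx
        funext a
        have := congrFun h (Sum.inl a)
        simpa using this
      have hlt := real_posdef_lt hLMI hz
      rw [quad_fromBlocks] at hlt
      -- expand pieces
      have e1 : x ⬝ᵥ ((Fᵀ * P + P * F + μ • (Vmᵀ * Vm)) *ᵥ x)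
          = x ⬝ᵥ ((Fᵀ * P + P * F) *ᵥ x) + μ * ((Vm *ᵥ x) ⬝ᵥ (Vm *ᵥ x)) := by
        rw [Matrix.add_mulVec, dotProduct_add]
        congr 1
        rw [Matrix.smul_mulVec, dotProduct_smul, smul_eq_mul, ← Matrix.mulVec_mulVec,
          dot_transpose_mulVec]
      have e2 : (w ⬝ᵥ ((-(μ • (1 : Matrix (Fin p) (Fin p) ℝ))) *ᵥ w)) = -(μ * (w ⬝ᵥ w)) := by
        rw [Matrix.neg_mulVec, dotProduct_neg, Matrix.smul_mulVec, dotProduct_smul]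
        simp
      have e3 : x ⬝ᵥ ((P * U) *ᵥ w) = x ⬝ᵥ (P *ᵥ (U *ᵥ w)) := by
        simp [Matrix.mulVec_mulVec]
      have e4 : w ⬝ᵥ ((Uᵀ * P) *ᵥ x) = (U *ᵥ w) ⬝ᵥ (P *ᵥ x) := by
        rw [← Matrix.mulVec_mulVec, dot_transpose_mulVec]
      rw [e1, e2, e3, e4] at hlt
      have e5 : x ⬝ᵥ (((U * Δ * Vm)ᵀ * P) *ᵥ x) = (U *ᵥ w) ⬝ᵥ (P *ᵥ x) := by
        rw [← Matrix.mulVec_mulVec, dot_transpose_mulVec]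
        simp [hw, Matrix.mulVec_mulVec, Matrix.mul_assoc]
      have e6 : x ⬝ᵥ ((P * (U * Δ * Vm)) *ᵥ x) = x ⬝ᵥ (P *ᵥ (U *ᵥ w)) := by
        simp [hw, Matrix.mulVec_mulVec, Matrix.mul_assoc]
      have hgoal : x ⬝ᵥ ((Aᵀ * P + P * A) *ᵥ x)
          = x ⬝ᵥ ((Fᵀ * P + P * F) *ᵥ x) + (x ⬝ᵥ (P *ᵥ (U *ᵥ w)) + (U *ᵥ w) ⬝ᵥ (P *ᵥ x)) := by
        rw [hA]
        have hAe : (F + U * Δ * Vm)ᵀ * P + P * (F + U * Δ * Vm)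
            = (Fᵀ * P + P * F) + ((U * Δ * Vm)ᵀ * P + P * (U * Δ * Vm)) := by
          rw [Matrix.transpose_add, Matrix.add_mul, Matrix.mul_add]; abel
        rw [hAe]
        simp only [Matrix.add_mulVec, dotProduct_add, e5, e6]
        ring
      rw [hgoal]
      have hspec := hΔ (Vm *ᵥ x)
      nlinarith [hspec]
    linarith

lemma sym_dot {m : Type*} [Fintype m] {Z : Matrix m m ℝ} (hZ : Z.IsSymm)
    (u v : m → ℝ) : u ⬝ᵥ (Z *ᵥ v) = v ⬝ᵥ (Z *ᵥ u) := by
  conv_lhs => rw [← hZ.eq]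
  rw [dot_transpose_mulVec, dotProduct_comm]

lemma isHermitian_of_isSymm {m : Type*} {M : Matrix m m ℝ} (h : M.IsSymm) :
    M.IsHermitian := by
  rw [Matrix.IsHermitian]
  ext i j
  simpa [Matrix.conjTranspose_apply] using congrFun (congrFun h.eq i) j

lemma real_possemidef_le {m : Type*} [Fintype m] {M : Matrix m m ℝ}
    (hM : (-M).PosSemidef) (v : m → ℝ) : v ⬝ᵥ (M *ᵥ v) ≤ 0 := by
  have := hM.dotProduct_mulVec_nonneg v
  simp only [star_trivial, Matrix.neg_mulVec, dotProduct_neg] at this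
  linarith


lemma Z_mulVec_inl {n : ℕ} (Z : Matrix (Fin n ⊕ (Fin n ⊕ Fin n)) (Fin n ⊕ (Fin n ⊕ Fin n)) ℝ)
    (u : Fin n → ℝ) :
    Z *ᵥ (Sum.elim u 0) = Sum.elim (blk11 Z *ᵥ u)
      (Sum.elim (blk21 Z *ᵥ u) (blk31 Z *ᵥ u)) := by
  funext a
  rcases a with a | a | a <;>
    simp [Matrix.mulVec, dotProduct, Fintype.sum_sum_type, blk11, blk21, blk31]

lemma elim_add {α β : Type*} (u v : α → ℝ) (w z : β → ℝ) :
    Sum.elim (u + v) (w + z) = Sum.elim u w + Sum.elim v z := by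
  funext a; rcases a with a | a <;> simp

lemma Y1_mulVec {n : ℕ} (u v : Fin n → ℝ) :
    Y1 n *ᵥ Sum.elim u v = Sum.elim u (Sum.elim u v) := by
  rw [Y1, Matrix.fromBlocks_mulVec]
  simp only [Matrix.fromRows_mulVec, Matrix.one_mulVec, Matrix.zero_mulVec]
  funext a; rcases a with a | a <;> [skip; rcases a with a | a] <;> simp

lemma Y2_mulVec {n : ℕ} (u v : Fin n → ℝ) :
    Y2 n *ᵥ Sum.elim u v = Sum.elim v (Sum.elim u v) := by
  rw [Y2, Matrix.fromBlocks_mulVec]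
  simp only [Matrix.fromRows_mulVec, Matrix.one_mulVec, Matrix.zero_mulVec]
  funext a; rcases a with a | a <;> [skip; rcases a with a | a] <;> simp

lemma continuous_quad {n : ℕ} (M : Matrix (Fin n) (Fin n) ℝ) :
    Continuous fun v : Fin n → ℝ => v ⬝ᵥ (M *ᵥ v) := by
  simp only [dotProduct, Matrix.mulVec]
  exact continuous_finset_sum _ fun a _ => (continuous_apply a).mul
    (continuous_finset_sum _ fun b _ => continuous_const.mul (continuous_apply b))

lemma posdef_quad_pos {m : Type*} [Fintype m] {M : Matrix m m ℝ} (hM : M.PosDef)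
    {v : m → ℝ} (hv : v ≠ 0) : 0 < v ⬝ᵥ (M *ᵥ v) := by
  have := hM.dotProduct_mulVec_pos hv
  simpa using this

lemma posdef_lower {n : ℕ} (hn : 1 ≤ n) {M : Matrix (Fin n) (Fin n) ℝ} (hM : M.PosDef) :
    ∃ c > 0, ∀ v : Fin n → ℝ, c * (v ⬝ᵥ v) ≤ v ⬝ᵥ (M *ᵥ v) := by
  set S : Set (Fin n → ℝ) := {v | v ⬝ᵥ v = 1} with hS
  have hcont : Continuous fun v : Fin n → ℝ => v ⬝ᵥ (M *ᵥ v) := continuous_quad M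
  have hcont1 : Continuous fun v : Fin n → ℝ => v ⬝ᵥ v := by
    simpa using continuous_quad (1 : Matrix (Fin n) (Fin n) ℝ)
  have hSc : IsCompact S := by
    apply Metric.isCompact_of_isClosed_isBounded
    · exact isClosed_eq hcont1 continuous_const
    · rw [Metric.isBounded_iff_subset_closedBall 0]
      refine ⟨1, fun v hv => ?_⟩
      simp only [Metric.mem_closedBall, dist_zero_right]
      rw [pi_norm_le_iff_of_nonneg zero_le_one]
      intro a
      have h1 : (v a)^2 ≤ v ⬝ᵥ v := by
        rw [dotProduct]
        have : ∀ b ∈ Finset.univ, (0:ℝ) ≤ v b * v b := fun b _ => mul_self_nonneg _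
        calc (v a)^2 = v a * v a := sq (v a) ▸ (pow_two (v a))
        _ ≤ ∑ b, v b * v b := Finset.single_le_sum this (Finset.mem_univ a)
      rw [Set.mem_setOf_eq] at hv
      rw [hv] at h1
      rw [Real.norm_eq_abs, ← Real.sqrt_one]
      rw [show |v a| = Real.sqrt ((v a)^2) by rw [Real.sqrt_sq_eq_abs]]
      exact Real.sqrt_le_sqrt h1
  have hne : S.Nonempty := by
    obtain ⟨a⟩ : Nonempty (Fin n) := ⟨⟨0, hn⟩⟩
    refine ⟨Pi.single a 1, ?_⟩
    simp [hS, dotProduct, Pi.single_apply]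
  obtain ⟨v₀, hv₀S, hmin'⟩ := hSc.exists_isMinOn hne hcont.continuousOn
  have hmin : ∀ y ∈ S, v₀ ⬝ᵥ (M *ᵥ v₀) ≤ y ⬝ᵥ (M *ᵥ y) := fun y hy => hmin' hy
  have hv₀ : v₀ ≠ 0 := by
    intro h; rw [hS, Set.mem_setOf_eq, h] at hv₀S; simp at hv₀S
  refine ⟨v₀ ⬝ᵥ (M *ᵥ v₀), posdef_quad_pos hM hv₀, fun v => ?_⟩
  rcases eq_or_ne v 0 with rfl | hv
  · simp
  · have hvv : 0 < v ⬝ᵥ v := by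
      simpa using posdef_quad_pos (M := (1:Matrix (Fin n) (Fin n) ℝ)) Matrix.PosDef.one hv
    set r : ℝ := Real.sqrt (v ⬝ᵥ v) with hr
    have hr0 : 0 < r := Real.sqrt_pos.2 hvv
    have hu : (r⁻¹ • v) ∈ S := by
      rw [hS, Set.mem_setOf_eq]
      rw [smul_dotProduct, dotProduct_smul, smul_eq_mul, smul_eq_mul]
      rw [← mul_assoc]
      have : r⁻¹ * r⁻¹ * (v ⬝ᵥ v) = (v ⬝ᵥ v) / (r * r) := by field_simp
      rw [this, hr, Real.mul_self_sqrt hvv.le, div_self hvv.ne']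
    have := hmin _ hu
    have hquad : (r⁻¹ • v) ⬝ᵥ (M *ᵥ (r⁻¹ • v)) = r⁻¹ * r⁻¹ * (v ⬝ᵥ (M *ᵥ v)) := by
      rw [Matrix.mulVec_smul, smul_dotProduct, dotProduct_smul]
      simp [mul_assoc]
    rw [hquad] at this
    have hrr : r * r = v ⬝ᵥ v := Real.mul_self_sqrt hvv.le
    calc (v₀ ⬝ᵥ (M *ᵥ v₀)) * (v ⬝ᵥ v) ≤ (r⁻¹ * r⁻¹ * (v ⬝ᵥ (M *ᵥ v))) * (v ⬝ᵥ v) := by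
          apply mul_le_mul_of_nonneg_right this hvv.le
    _ = v ⬝ᵥ (M *ᵥ v) := by
          rw [← hrr]; field_simp

lemma quad_upper {n : ℕ} (M : Matrix (Fin n) (Fin n) ℝ) :
    ∃ C : ℝ, 0 ≤ C ∧ ∀ v : Fin n → ℝ, v ⬝ᵥ (M *ᵥ v) ≤ C * (v ⬝ᵥ v) := by
  refine ⟨∑ a : Fin n, ∑ b : Fin n, |M a b|, by positivity, fun v => ?_⟩
  have hvv : ∀ a b : Fin n, v a * (M a b * v b) ≤ |M a b| * (v ⬝ᵥ v) := by
    intro a b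
    have h1 : v a * (M a b * v b) ≤ |M a b| * (|v a| * |v b|) := by
      calc v a * (M a b * v b) ≤ |v a * (M a b * v b)| := le_abs_self _
      _ = |M a b| * (|v a| * |v b|) := by rw [abs_mul, abs_mul]; ring
    have h2 : |v a| * |v b| ≤ v ⬝ᵥ v := by
      have hab : |v a| * |v b| ≤ ((v a)^2 + (v b)^2)/2 := by nlinarith [sq_nonneg (|v a| - |v b|), sq_abs (v a), sq_abs (v b)]
      have ha : (v a)^2 ≤ v ⬝ᵥ v := by
        rw [dotProduct, pow_two]
        exact Finset.single_le_sum (fun b _ => mul_self_nonneg (v b)) (Finset.mem_univ a)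
      have hb : (v b)^2 ≤ v ⬝ᵥ v := by
        rw [dotProduct, pow_two]
        exact Finset.single_le_sum (fun c _ => mul_self_nonneg (v c)) (Finset.mem_univ b)
      linarith
    calc v a * (M a b * v b) ≤ |M a b| * (|v a| * |v b|) := h1
    _ ≤ |M a b| * (v ⬝ᵥ v) := mul_le_mul_of_nonneg_left h2 (abs_nonneg _)
  calc v ⬝ᵥ (M *ᵥ v) = ∑ a, ∑ b, v a * (M a b * v b) := by
        simp [dotProduct, Matrix.mulVec, Finset.mul_sum]
  _ ≤ ∑ a, ∑ b, |M a b| * (v ⬝ᵥ v) := by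
        apply Finset.sum_le_sum; intro a _; apply Finset.sum_le_sum; intro b _; exact hvv a b
  _ = (∑ a : Fin n, ∑ b : Fin n, |M a b|) * (v ⬝ᵥ v) := by
        rw [Finset.sum_mul]; congr 1; funext a; rw [Finset.sum_mul]

lemma hasDerivAt_quadForm {m : Type*} [Fintype m] {Zf : ℝ → Matrix m m ℝ} {Zd : Matrix m m ℝ}
    {v : ℝ → m → ℝ} {vd : m → ℝ} {τ : ℝ}
    (hZ : ∀ a b, HasDerivAt (fun s => Zf s a b) (Zd a b) τ)
    (hv : ∀ a, HasDerivAt (fun s => v s a) (vd a) τ) :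
    HasDerivAt (fun s => v s ⬝ᵥ (Zf s *ᵥ v s))
      (vd ⬝ᵥ (Zf τ *ᵥ v τ) + v τ ⬝ᵥ (Zd *ᵥ v τ) + v τ ⬝ᵥ (Zf τ *ᵥ vd)) τ := by
  have key : ∀ a b : m, HasDerivAt (fun s => v s a * (Zf s a b * v s b))
      (vd a * (Zf τ a b * v τ b) + v τ a * (Zd a b * v τ b) + v τ a * (Zf τ a b * vd b)) τ := by
    intro a b
    have h1 := (hZ a b).fun_mul (hv b)
    have h2 := (hv a).fun_mul h1
    exact h2.congr_deriv (by ring)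
  have hsum : HasDerivAt (fun s => ∑ a : m, ∑ b : m, v s a * (Zf s a b * v s b))
      (∑ a : m, ∑ b : m, (vd a * (Zf τ a b * v τ b) + v τ a * (Zd a b * v τ b)
        + v τ a * (Zf τ a b * vd b))) τ := by
    apply HasDerivAt.fun_sum; intro a _; apply HasDerivAt.fun_sum; intro b _; exact key a b
  convert hsum using 1
  · funext s
    simp [dotProduct, Matrix.mulVec, Finset.mul_sum]
  · simp [dotProduct, Matrix.mulVec, Finset.mul_sum, Finset.sum_add_distrib]

lemma hasDerivAt_expMulVec {n : ℕ} (A : Matrix (Fin n) (Fin n) ℝ) (y : Fin n → ℝ) (τ : ℝ)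
    (a : Fin n) :
    HasDerivAt (fun s : ℝ => (NormedSpace.exp (s • A) *ᵥ y) a)
      ((A *ᵥ (NormedSpace.exp (τ • A) *ᵥ y)) a) τ := by
  letI : NormedRing (Matrix (Fin n) (Fin n) ℝ) := Matrix.linftyOpNormedRing
  letI : NormedAlgebra ℝ (Matrix (Fin n) (Fin n) ℝ) := Matrix.linftyOpNormedAlgebra
  have h := hasDerivAt_exp_smul_const' (𝕂 := ℝ) A τ
  let L : Matrix (Fin n) (Fin n) ℝ →L[ℝ] ℝ :=
    LinearMap.mkContinuous
      { toFun := fun M => (M *ᵥ y) a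
        map_add' := by intro M M'; simp [Matrix.add_mulVec]
        map_smul' := by intro c M; simp [Matrix.smul_mulVec] }
      ‖y‖ (by
        intro M
        calc ‖(M *ᵥ y) a‖ ≤ ‖M *ᵥ y‖ := norm_le_pi_norm _ a
        _ ≤ ‖M‖ * ‖y‖ := Matrix.linfty_opNorm_mulVec _ _
        _ = ‖y‖ * ‖M‖ := mul_comm _ _)
  have := L.hasFDerivAt.comp_hasDerivAt τ h
  refine this.congr_deriv ?_
  simp [L, Matrix.mulVec_mulVec, LinearMap.mkContinuous_apply]
  rfl

lemma part2 {n p q : ℕ}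
    (F : Matrix (Fin n) (Fin n) ℝ) (U : Matrix (Fin n) (Fin p) ℝ)
    (Vm : Matrix (Fin q) (Fin n) ℝ)
    (T ε : ℝ) (hT : 0 < T) (hε : 0 < ε)
    (Pi Pj : Matrix (Fin n) (Fin n) ℝ) (hPi : Pi.IsSymm) (hPj : Pj.IsSymm)
    (μf : ℝ → ℝ) (hμf : ∀ τ ∈ Set.Icc (0:ℝ) T, 0 ≤ μf τ)
    (Z Z' : ℝ → Matrix (Fin n ⊕ (Fin n ⊕ Fin n)) (Fin n ⊕ (Fin n ⊕ Fin n)) ℝ)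
    (hZsymm : ∀ τ ∈ Set.Icc (0:ℝ) T, (Z τ).IsSymm)
    (hZderiv : ∀ τ ∈ Set.Icc (0:ℝ) T, ∀ a b, HasDerivAt (fun s => Z s a b) (Z' τ a b) τ)
    (hloop : (Y2 n)ᵀ * Z T * Y2 n - (Y1 n)ᵀ * Z 0 * Y1 n = 0)
    (hLMI : ∀ τ ∈ Set.Icc (0:ℝ) T,
      (-(Matrix.fromBlocks
          (Psi T ε F Pi Pj + He (Z τ * Dn F) + Dn (μf τ • (Vmᵀ * Vm)) + Z' τ)
          (Matrix.fromRows ((blk11 (Z τ) + T • Pi) * U)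
            (Matrix.fromRows (blk21 (Z τ) * U) (blk31 (Z τ) * U)))
          (Matrix.fromRows ((blk11 (Z τ) + T • Pi) * U)
            (Matrix.fromRows (blk21 (Z τ) * U) (blk31 (Z τ) * U)))ᵀ
          (-(μf τ • (1 : Matrix (Fin p) (Fin p) ℝ))))).PosSemidef)
    (Δ : Matrix (Fin p) (Fin q) ℝ) (hΔ : SpecNormLEOne Δ) :
    (-(NormedSpace.exp (T • (F + U * Δ * Vm)ᵀ) * Pi
        * NormedSpace.exp (T • (F + U * Δ * Vm)) - Pj)).PosDef := by
  set A := F + U * Δ * Vm with hA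
  set E := NormedSpace.exp (T • A) with hE
  have hAT : (T • A)ᵀ = T • Aᵀ := Matrix.transpose_smul T A
  have hET : NormedSpace.exp (T • Aᵀ) = Eᵀ := by
    rw [← hAT, Matrix.exp_transpose]
  refine Matrix.PosDef.of_dotProduct_mulVec_pos ?_ ?_
  · apply isHermitian_of_isSymm
    have h1 : (Eᵀ * Pi * E - Pj).IsSymm := by
      rw [Matrix.IsSymm, Matrix.transpose_sub, hPj.eq, Matrix.transpose_mul,
        Matrix.transpose_mul, Matrix.transpose_transpose, hPi.eq, Matrix.mul_assoc]
    rw [hET, Matrix.IsSymm, Matrix.transpose_neg, h1.eq]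
  · intro y hy
    simp only [star_trivial]
    set xT := E *ᵥ y with hxT
    have hquadE : y ⬝ᵥ ((NormedSpace.exp (T • Aᵀ) * Pi * E) *ᵥ y) = xT ⬝ᵥ (Pi *ᵥ xT) := by
      rw [hET, ← Matrix.mulVec_mulVec, ← Matrix.mulVec_mulVec, dot_transpose_mulVec, hxT]
    have key : xT ⬝ᵥ (Pi *ᵥ xT) - y ⬝ᵥ (Pj *ᵥ y) ≤ -(ε * (y ⬝ᵥ y)) := by
      set x : ℝ → Fin n → ℝ := fun s => NormedSpace.exp (s • A) *ᵥ y with hx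
      have hx0 : x 0 = y := by
        rw [hx]; simp [NormedSpace.exp_zero]
      set χ : ℝ → (Fin n ⊕ (Fin n ⊕ Fin n)) → ℝ :=
        fun s => Sum.elim (x s) (Sum.elim y xT) with hχ
      set c6 : ℝ := y ⬝ᵥ ((Pi - Pj + ε • (1:Matrix (Fin n) (Fin n) ℝ)) *ᵥ y) with hc6
      set h : ℝ → ℝ :=
        fun s => χ s ⬝ᵥ (Z s *ᵥ χ s) + T * (x s ⬝ᵥ (Pi *ᵥ x s)) + s * c6 with hh
      have hχd : ∀ τ : ℝ, ∀ a, HasDerivAt (fun s => χ s a)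
          ((Sum.elim (A *ᵥ x τ) (0 : (Fin n ⊕ Fin n) → ℝ)) a) τ := by
        intro τ a
        rcases a with a | a
        · exact hasDerivAt_expMulVec A y τ a
        · exact hasDerivAt_const τ (Sum.elim y xT a)
      have hd : ∀ τ ∈ Set.Icc (0:ℝ) T, HasDerivAt h
          ((Sum.elim (A *ᵥ x τ) (0 : (Fin n ⊕ Fin n) → ℝ)) ⬝ᵥ (Z τ *ᵥ χ τ)
            + χ τ ⬝ᵥ (Z' τ *ᵥ χ τ)
            + χ τ ⬝ᵥ (Z τ *ᵥ (Sum.elim (A *ᵥ x τ) (0 : (Fin n ⊕ Fin n) → ℝ)))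
            + T * ((A *ᵥ x τ) ⬝ᵥ (Pi *ᵥ x τ) + x τ ⬝ᵥ (Pi *ᵥ (A *ᵥ x τ))) + c6) τ := by
        intro τ hτ
        have H1 := hasDerivAt_quadForm (hZderiv τ hτ) (hχd τ)
        have H2 : HasDerivAt (fun s => x s ⬝ᵥ (Pi *ᵥ x s))
            ((A *ᵥ x τ) ⬝ᵥ (Pi *ᵥ x τ) + x τ ⬝ᵥ (Pi *ᵥ (A *ᵥ x τ))) τ := by
          have := hasDerivAt_quadForm (Zf := fun _ => Pi) (Zd := 0)
            (v := x) (vd := A *ᵥ x τ) (τ := τ)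
            (fun a b => hasDerivAt_const τ (Pi a b))
            (fun a => hasDerivAt_expMulVec A y τ a)
          simpa using this
        have H3 : HasDerivAt (fun s : ℝ => s * c6) c6 τ := by
          simpa using (hasDerivAt_id τ).mul_const c6
        exact (H1.add (H2.const_mul T)).add H3
      have hdle : ∀ τ ∈ Set.Icc (0:ℝ) T,
          ((Sum.elim (A *ᵥ x τ) (0 : (Fin n ⊕ Fin n) → ℝ)) ⬝ᵥ (Z τ *ᵥ χ τ)
            + χ τ ⬝ᵥ (Z' τ *ᵥ χ τ)
            + χ τ ⬝ᵥ (Z τ *ᵥ (Sum.elim (A *ᵥ x τ) (0 : (Fin n ⊕ Fin n) → ℝ)))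
            + T * ((A *ᵥ x τ) ⬝ᵥ (Pi *ᵥ x τ) + x τ ⬝ᵥ (Pi *ᵥ (A *ᵥ x τ))) + c6) ≤ 0 := by
        intro τ hτ
        have hsym := hZsymm τ hτ
        set w : Fin p → ℝ := Δ *ᵥ (Vm *ᵥ x τ) with hwdef
        set g : (Fin n ⊕ (Fin n ⊕ Fin n)) → ℝ :=
          Sum.elim (F *ᵥ x τ) (0 : (Fin n ⊕ Fin n) → ℝ) with hgdef
        set eU : (Fin n ⊕ (Fin n ⊕ Fin n)) → ℝ :=
          Sum.elim (U *ᵥ w) (0 : (Fin n ⊕ Fin n) → ℝ) with heUdef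
        have hχτ : χ τ = Sum.elim (x τ) (Sum.elim y xT) := rfl
        have hAx : A *ᵥ x τ = F *ᵥ x τ + U *ᵥ w := by
          rw [hA, Matrix.add_mulVec]
          congr 1
          rw [hwdef]
          simp [Matrix.mulVec_mulVec, Matrix.mul_assoc]
        have F1 : Sum.elim (A *ᵥ x τ) (0 : (Fin n ⊕ Fin n) → ℝ) = g + eU := by
          rw [hAx, hgdef, heUdef, ← elim_add]
          simp
        -- big LMI
        have hBig := real_possemidef_le (hLMI τ hτ) (Sum.elim (χ τ) w)
        rw [quad_fromBlocks] at hBig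
        -- expand Xi
        simp only [Matrix.add_mulVec, dotProduct_add] at hBig
        -- Psi quadratic form
        have F6 : χ τ ⬝ᵥ (Psi T ε F Pi Pj *ᵥ χ τ)
            = T * ((F *ᵥ x τ) ⬝ᵥ (Pi *ᵥ x τ) + x τ ⬝ᵥ (Pi *ᵥ (F *ᵥ x τ))) + c6 := by
          rw [hχτ, Psi, quad_fromBlocks, quad_fromBlocks]
          simp only [Matrix.zero_mulVec, dotProduct_zero, add_zero, zero_add,
            Matrix.smul_mulVec, dotProduct_smul, smul_eq_mul]
          rw [hc6]
          congr 1
          rw [Matrix.add_mulVec, dotProduct_add, ← Matrix.mulVec_mulVec,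
            dot_transpose_mulVec, ← Matrix.mulVec_mulVec]
        -- He quadratic form
        have hgD : Dn F *ᵥ χ τ = g := by
          rw [hχτ, Dn, Matrix.fromBlocks_mulVec, hgdef]
          simp
        have F7 : χ τ ⬝ᵥ (He (Z τ * Dn F) *ᵥ χ τ)
            = 2 * (χ τ ⬝ᵥ (Z τ *ᵥ g)) := by
          rw [He, Matrix.add_mulVec, dotProduct_add, dot_transpose_mulVec,
            ← Matrix.mulVec_mulVec, hgD, dotProduct_comm]
          ring
        -- Dn μ VᵀV quadratic form
        have F8 : χ τ ⬝ᵥ (Dn (μf τ • (Vmᵀ * Vm)) *ᵥ χ τ)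
            = μf τ * ((Vm *ᵥ x τ) ⬝ᵥ (Vm *ᵥ x τ)) := by
          conv_lhs => rw [hχτ, Dn, Matrix.fromBlocks_mulVec]
          simp only [Matrix.zero_mulVec, dotProduct_zero, add_zero, zero_add,
            sumElim_dotProduct_sumElim, dotProduct_zero]
          rw [Matrix.smul_mulVec, dotProduct_smul, smul_eq_mul, ← Matrix.mulVec_mulVec,
            dot_transpose_mulVec]
          simp
        -- W term
        have F9 : (Matrix.fromRows ((blk11 (Z τ) + T • Pi) * U)
              (Matrix.fromRows (blk21 (Z τ) * U) (blk31 (Z τ) * U))) *ᵥ w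
            = Z τ *ᵥ eU + Sum.elim (T • (Pi *ᵥ (U *ᵥ w))) (0 : (Fin n ⊕ Fin n) → ℝ) := by
          rw [Matrix.fromRows_mulVec, Matrix.fromRows_mulVec, heUdef, Z_mulVec_inl]
          funext a
          rcases a with a | a | a
          · simp [Matrix.add_mul, Matrix.add_mulVec, Matrix.mulVec_mulVec,
              Matrix.smul_mulVec]
          · simp [Matrix.mulVec_mulVec]
          · simp [Matrix.mulVec_mulVec]
        have F9' : χ τ ⬝ᵥ ((Matrix.fromRows ((blk11 (Z τ) + T • Pi) * U)
              (Matrix.fromRows (blk21 (Z τ) * U) (blk31 (Z τ) * U))) *ᵥ w)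
            = χ τ ⬝ᵥ (Z τ *ᵥ eU) + T * (x τ ⬝ᵥ (Pi *ᵥ (U *ᵥ w))) := by
          rw [F9, dotProduct_add]
          congr 1
          rw [hχτ, sumElim_dotProduct_sumElim, dotProduct_zero, add_zero,
            dotProduct_smul, smul_eq_mul]
        have F10 : w ⬝ᵥ ((Matrix.fromRows ((blk11 (Z τ) + T • Pi) * U)
              (Matrix.fromRows (blk21 (Z τ) * U) (blk31 (Z τ) * U)))ᵀ *ᵥ χ τ)
            = χ τ ⬝ᵥ ((Matrix.fromRows ((blk11 (Z τ) + T • Pi) * U)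
              (Matrix.fromRows (blk21 (Z τ) * U) (blk31 (Z τ) * U))) *ᵥ w) := by
          rw [dot_transpose_mulVec, dotProduct_comm]
        have F11 : w ⬝ᵥ ((-(μf τ • (1 : Matrix (Fin p) (Fin p) ℝ))) *ᵥ w)
            = -(μf τ * (w ⬝ᵥ w)) := by
          rw [Matrix.neg_mulVec, dotProduct_neg, Matrix.smul_mulVec, dotProduct_smul]
          simp
        rw [F6, F7, F8, F9', F10, F9', F11] at hBig
        -- symmetry facts
        have S1 : (U *ᵥ w) ⬝ᵥ (Pi *ᵥ x τ) = x τ ⬝ᵥ (Pi *ᵥ (U *ᵥ w)) := sym_dot hPi _ _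
        have S2 : (g + eU) ⬝ᵥ (Z τ *ᵥ χ τ) = χ τ ⬝ᵥ (Z τ *ᵥ (g + eU)) := sym_dot hsym _ _
        -- expand goal
        rw [F1, S2, Matrix.mulVec_add, dotProduct_add, hAx, add_dotProduct,
          Matrix.mulVec_add, dotProduct_add, S1]
        have hspec : w ⬝ᵥ w ≤ (Vm *ᵥ x τ) ⬝ᵥ (Vm *ᵥ x τ) := hΔ (Vm *ᵥ x τ)
        have hprod : 0 ≤ μf τ * ((Vm *ᵥ x τ) ⬝ᵥ (Vm *ᵥ x τ)) - μf τ * (w ⬝ᵥ w) := by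
          have := mul_nonneg (hμf τ hτ) (sub_nonneg.2 hspec)
          rw [mul_sub] at this
          linarith
        -- split the eU part of goal atoms
        have heUsplit : χ τ ⬝ᵥ (Z τ *ᵥ eU) = χ τ ⬝ᵥ (Z τ *ᵥ eU) := rfl
        nlinarith [hBig, hprod]
      -- monotonicity
      have hmono : AntitoneOn h (Set.Icc 0 T) := by
        apply antitoneOn_of_deriv_nonpos (convex_Icc 0 T)
        · intro τ hτ
          exact (hd τ hτ).continuousAt.continuousWithinAt
        · intro τ hτ
          rw [interior_Icc] at hτ
          exact ((hd τ (Set.mem_Icc_of_Ioo hτ)).differentiableAt).differentiableWithinAt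
        · intro τ hτ
          rw [interior_Icc] at hτ
          have hτ' := Set.mem_Icc_of_Ioo hτ
          rw [(hd τ hτ').deriv]
          exact hdle τ hτ'
      have hhTle : h T ≤ h 0 :=
        hmono (Set.left_mem_Icc.2 hT.le) (Set.right_mem_Icc.2 hT.le) hT.le
      have hχ0 : χ 0 = Y1 n *ᵥ Sum.elim y xT := by
        rw [hχ]
        simp only [hx0]
        rw [Y1_mulVec]
      have hχT : χ T = Y2 n *ᵥ Sum.elim y xT := by
        rw [hχ]
        simp only []
        rw [Y2_mulVec]
      have hYquad : ∀ (Y : Matrix (Fin n ⊕ (Fin n ⊕ Fin n)) (Fin n ⊕ Fin n) ℝ)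
          (M : Matrix (Fin n ⊕ (Fin n ⊕ Fin n)) (Fin n ⊕ (Fin n ⊕ Fin n)) ℝ)
          (η : (Fin n ⊕ Fin n) → ℝ),
          (Y *ᵥ η) ⬝ᵥ (M *ᵥ (Y *ᵥ η)) = η ⬝ᵥ ((Yᵀ * M * Y) *ᵥ η) := by
        intro Y M η
        rw [← Matrix.mulVec_mulVec, ← Matrix.mulVec_mulVec, dot_transpose_mulVec]
      have hZquad : χ T ⬝ᵥ (Z T *ᵥ χ T) = χ 0 ⬝ᵥ (Z 0 *ᵥ χ 0) := by
        rw [hχ0, hχT, hYquad, hYquad, sub_eq_zero.mp hloop]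
      have hh0 : h 0 = χ 0 ⬝ᵥ (Z 0 *ᵥ χ 0) + T * (y ⬝ᵥ (Pi *ᵥ y)) := by
        rw [hh]
        simp [hx0]
      have hhT : h T = χ T ⬝ᵥ (Z T *ᵥ χ T) + T * (xT ⬝ᵥ (Pi *ᵥ xT)) + T * c6 := rfl
      have hc6e : c6 = y ⬝ᵥ (Pi *ᵥ y) - y ⬝ᵥ (Pj *ᵥ y) + ε * (y ⬝ᵥ y) := by
        rw [hc6, Matrix.add_mulVec, Matrix.sub_mulVec, dotProduct_add, dotProduct_sub,
          Matrix.smul_mulVec, dotProduct_smul, Matrix.one_mulVec, smul_eq_mul]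
      have h5 := hhTle
      rw [hhT, hh0, hZquad] at h5
      have h4 : xT ⬝ᵥ (Pi *ᵥ xT) + c6 ≤ y ⬝ᵥ (Pi *ᵥ y) := by
        have h6 : T * (xT ⬝ᵥ (Pi *ᵥ xT) + c6) ≤ T * (y ⬝ᵥ (Pi *ᵥ y)) := by
          rw [mul_add]; linarith
        exact le_of_mul_le_mul_left h6 hT
      rw [hc6e] at h4
      linarith
    have hyy : 0 < y ⬝ᵥ y := by
      have := Matrix.PosDef.one (n := Fin n) (R := ℝ)
      have h2 := this.dotProduct_mulVec_pos hy
      simpa using h2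
    have h3 : y ⬝ᵥ ((-(NormedSpace.exp (T • Aᵀ) * Pi * E - Pj)) *ᵥ y)
        = -(xT ⬝ᵥ (Pi *ᵥ xT) - y ⬝ᵥ (Pj *ᵥ y)) := by
      rw [Matrix.neg_mulVec, dotProduct_neg, Matrix.sub_mulVec, dotProduct_sub, hquadE]
    rw [h3]
    nlinarith [mul_pos hε hyy]


lemma dot_self_nonneg {m : Type*} [Fintype m] (v : m → ℝ) : 0 ≤ v ⬝ᵥ v :=
  Finset.sum_nonneg fun i _ => mul_self_nonneg (v i)

lemma real_posdef_le {m : Type*} [Fintype m] {M : Matrix m m ℝ} (hM : (-M).PosDef)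
    (v : m → ℝ) : v ⬝ᵥ (M *ᵥ v) ≤ 0 := by
  rcases eq_or_ne v 0 with rfl | hv
  · simp
  · exact (real_posdef_lt hM hv).le

lemma posdef_quad_nonneg {m : Type*} [Fintype m] {M : Matrix m m ℝ} (hM : M.PosDef)
    (v : m → ℝ) : 0 ≤ v ⬝ᵥ (M *ᵥ v) := by
  rcases eq_or_ne v 0 with rfl | hv
  · simp
  · exact (posdef_quad_pos hM hv).le

lemma flow_antitone {n : ℕ} (A P : Matrix (Fin n) (Fin n) ℝ)
    (h1 : (-(Aᵀ * P + P * A)).PosDef) (v : Fin n → ℝ) :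
    Antitone (fun s : ℝ =>
      (NormedSpace.exp (s • A) *ᵥ v) ⬝ᵥ (P *ᵥ (NormedSpace.exp (s • A) *ᵥ v))) := by
  set x : ℝ → Fin n → ℝ := fun s => NormedSpace.exp (s • A) *ᵥ v with hx
  have hd : ∀ τ : ℝ, HasDerivAt (fun s => x s ⬝ᵥ (P *ᵥ x s))
      ((A *ᵥ x τ) ⬝ᵥ (P *ᵥ x τ) + x τ ⬝ᵥ (P *ᵥ (A *ᵥ x τ))) τ := by
    intro τ
    have := hasDerivAt_quadForm (Zf := fun _ => P) (Zd := 0)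
      (v := x) (vd := A *ᵥ x τ) (τ := τ)
      (fun a b => hasDerivAt_const τ (P a b))
      (fun a => hasDerivAt_expMulVec A v τ a)
    simpa using this
  apply antitone_of_deriv_nonpos
  · exact fun τ => (hd τ).differentiableAt
  · intro τ
    rw [(hd τ).deriv]
    have e1 : (A *ᵥ x τ) ⬝ᵥ (P *ᵥ x τ) + x τ ⬝ᵥ (P *ᵥ (A *ᵥ x τ))
        = x τ ⬝ᵥ ((Aᵀ * P + P * A) *ᵥ x τ) := by
      rw [Matrix.add_mulVec, dotProduct_add, ← Matrix.mulVec_mulVec,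
        dot_transpose_mulVec, ← Matrix.mulVec_mulVec]
    rw [e1]
    exact real_posdef_le h1 _

open Filter Topology in
lemma part3 {n N : ℕ} (hn : 1 ≤ n) (hN : 1 ≤ N) (T : ℝ) (hT : 0 < T)
    (A P : Fin N → Matrix (Fin n) (Fin n) ℝ)
    (hPpos : ∀ i, (P i).PosDef)
    (h1 : ∀ i, (-((A i)ᵀ * P i + P i * A i)).PosDef)
    (h2 : ∀ i j, i ≠ j →
      (-(NormedSpace.exp (T • (A i)ᵀ) * P i * NormedSpace.exp (T • A i) - P j)).PosDef)
    (t : ℕ → ℝ) (ht0 : t 0 = 0) (htmono : StrictMono t) (httop : Tendsto t atTop atTop)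
    (ι : ℕ → Fin N) (hι : ∀ k, ι (k + 1) ≠ ι k) (hdwell : ∀ k, T ≤ t (k + 1) - t k)
    (x : ℝ → Fin n → ℝ)
    (htraj : ∀ k, ∀ s ∈ Set.Icc (t k) (t (k + 1)),
      x s = NormedSpace.exp ((s - t k) • A (ι k)) *ᵥ x (t k)) :
    Tendsto x atTop (𝓝 0) := by
  haveI : Nonempty (Fin N) := ⟨⟨0, hN⟩⟩
  -- constants
  obtain ⟨cP, hcP1, hcP2⟩ :
      ∃ cP : Fin N → ℝ, (∀ i, 0 < cP i) ∧
        ∀ i v, cP i * (v ⬝ᵥ v) ≤ v ⬝ᵥ (P i *ᵥ v) := by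
    have h : ∀ i, ∃ c, 0 < c ∧ ∀ v, c * (v ⬝ᵥ v) ≤ v ⬝ᵥ (P i *ᵥ v) := by
      intro i
      obtain ⟨c, hc, hc2⟩ := posdef_lower hn (hPpos i)
      exact ⟨c, hc, hc2⟩
    choose cP h1' h2' using h
    exact ⟨cP, h1', h2'⟩
  obtain ⟨CP, hCP1, hCP2⟩ :
      ∃ CP : Fin N → ℝ, (∀ i, 0 ≤ CP i) ∧
        ∀ i v, v ⬝ᵥ (P i *ᵥ v) ≤ CP i * (v ⬝ᵥ v) := by
    have h : ∀ i, ∃ C, 0 ≤ C ∧ ∀ v, v ⬝ᵥ (P i *ᵥ v) ≤ C * (v ⬝ᵥ v) := fun i => quad_upper (P i)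
    choose CP h1' h2' using h
    exact ⟨CP, h1', h2'⟩
  obtain ⟨m, hm0, hm1⟩ :
      ∃ m : Fin N → Fin N → ℝ, (∀ i j, 0 < m i j) ∧
        ∀ i j, i ≠ j → ∀ v, m i j * (v ⬝ᵥ v)
          ≤ v ⬝ᵥ ((P j - NormedSpace.exp (T • (A i)ᵀ) * P i
              * NormedSpace.exp (T • A i)) *ᵥ v) := by
    have h : ∀ i j, ∃ m, 0 < m ∧ (i ≠ j → ∀ v, m * (v ⬝ᵥ v)
        ≤ v ⬝ᵥ ((P j - NormedSpace.exp (T • (A i)ᵀ) * P i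
            * NormedSpace.exp (T • A i)) *ᵥ v)) := by
      intro i j
      by_cases hij : i = j
      · exact ⟨1, one_pos, fun h => absurd hij h⟩
      · have hpd : (P j - NormedSpace.exp (T • (A i)ᵀ) * P i
            * NormedSpace.exp (T • A i)).PosDef := by
          have := h2 i j hij
          rwa [neg_sub] at this
        obtain ⟨c, hc, hc2⟩ := posdef_lower hn hpd
        exact ⟨c, hc, fun _ => hc2⟩
    choose m h1' h2' using h
    exact ⟨m, h1', h2'⟩
  set cmin : ℝ := Finset.univ.inf' Finset.univ_nonempty cP with hcmin
  have hcmin_pos : 0 < cmin := (Finset.lt_inf'_iff _).2 fun i _ => hcP1 i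
  have hcmin_le : ∀ i, cmin ≤ cP i := fun i => Finset.inf'_le _ (Finset.mem_univ i)
  set Cmax : ℝ := Finset.univ.sup' Finset.univ_nonempty CP with hCmax
  have hCmax_le : ∀ i, CP i ≤ Cmax := fun i => Finset.le_sup' _ (Finset.mem_univ i)
  have hCmax_nonneg : 0 ≤ Cmax := le_trans (hCP1 (Classical.arbitrary _)) (hCmax_le _)
  set mmin : ℝ := Finset.univ.inf' Finset.univ_nonempty
    (fun i => Finset.univ.inf' Finset.univ_nonempty (m i)) with hmmin
  have hmmin_pos : 0 < mmin :=
    (Finset.lt_inf'_iff _).2 fun i _ => (Finset.lt_inf'_iff _).2 fun j _ => hm0 i j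
  have hmmin_le : ∀ i j, mmin ≤ m i j := fun i j =>
    le_trans (Finset.inf'_le _ (Finset.mem_univ i)) (Finset.inf'_le _ (Finset.mem_univ j))
  -- trajectory at switch points
  have htlt : ∀ k, t k < t (k + 1) := fun k => htmono (Nat.lt_succ_self k)
  have hXk : ∀ k, x (t (k + 1))
      = NormedSpace.exp ((t (k + 1) - t k) • A (ι k)) *ᵥ x (t k) := fun k =>
    htraj k (t (k + 1)) ⟨(htlt k).le, le_refl _⟩
  -- quadratic along exp: ET identity
  have hET : ∀ i (v : Fin n → ℝ),
      v ⬝ᵥ ((NormedSpace.exp (T • (A i)ᵀ) * P i * NormedSpace.exp (T • A i)) *ᵥ v)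
        = (NormedSpace.exp (T • A i) *ᵥ v) ⬝ᵥ (P i *ᵥ (NormedSpace.exp (T • A i) *ᵥ v)) := by
    intro i v
    rw [← Matrix.transpose_smul, Matrix.exp_transpose, ← Matrix.mulVec_mulVec,
      ← Matrix.mulVec_mulVec, dot_transpose_mulVec]
  -- one-step decrease
  set W : ℕ → ℝ := fun k => x (t (k + 1)) ⬝ᵥ (P (ι k) *ᵥ x (t (k + 1))) with hW
  set b : ℕ → ℝ := fun k => x (t (k + 1)) ⬝ᵥ x (t (k + 1)) with hb
  have hstep : ∀ k, W (k + 1) ≤ W k - mmin * b k := by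
    intro k
    set i := ι (k + 1) with hi
    set v := x (t (k + 1)) with hv
    set δ := t (k + 2) - t (k + 1) with hδdef
    have hδ : T ≤ δ := hdwell (k + 1)
    have hx2 : x (t (k + 2)) = NormedSpace.exp (δ • A i) *ᵥ v := hXk (k + 1)
    have hanti := flow_antitone (A i) (P i) (h1 i) v
    have e1 : W (k + 1) = (NormedSpace.exp (δ • A i) *ᵥ v)
        ⬝ᵥ (P i *ᵥ (NormedSpace.exp (δ • A i) *ᵥ v)) := by
      rw [hW]; simp only []; rw [hx2]
    have e2 : (NormedSpace.exp (δ • A i) *ᵥ v) ⬝ᵥ (P i *ᵥ (NormedSpace.exp (δ • A i) *ᵥ v))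
        ≤ (NormedSpace.exp (T • A i) *ᵥ v) ⬝ᵥ (P i *ᵥ (NormedSpace.exp (T • A i) *ᵥ v)) :=
      hanti hδ
    have e3 := hm1 i (ι k) (hι k) v
    rw [Matrix.sub_mulVec, dotProduct_sub, hET] at e3
    have e4 : mmin * b k ≤ m i (ι k) * (v ⬝ᵥ v) :=
      mul_le_mul_of_nonneg_right (hmmin_le _ _) (dot_self_nonneg v)
    have e5 : W k = v ⬝ᵥ (P (ι k) *ᵥ v) := rfl
    rw [e1, e5]
    have hbk : b k = v ⬝ᵥ v := rfl
    rw [hbk]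
    linarith
  have hWnonneg : ∀ k, 0 ≤ W k := fun k => posdef_quad_nonneg (hPpos _) _
  have hbnonneg : ∀ k, 0 ≤ b k := fun k => dot_self_nonneg _
  have htel : ∀ K, mmin * (∑ k ∈ Finset.range K, b k) + W K ≤ W 0 := by
    intro K
    induction K with
    | zero => simp
    | succ K ih =>
      rw [Finset.sum_range_succ, mul_add]
      have := hstep K
      linarith
  have hbound : ∀ K, ∑ k ∈ Finset.range K, b k ≤ W 0 / mmin := by
    intro K
    rw [le_div_iff₀ hmmin_pos]
    have := htel K
    have := hWnonneg K
    nlinarith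
  have hsum : Summable b := summable_of_sum_range_le hbnonneg hbound
  have hb0 : Tendsto b atTop (𝓝 0) := hsum.tendsto_atTop_zero
  have hq : Tendsto (fun k => x (t k) ⬝ᵥ x (t k)) atTop (𝓝 0) := by
    rw [← tendsto_add_atTop_iff_nat 1]
    exact hb0
  -- index function
  have hex : ∀ s : ℝ, ∃ k, s < t (k + 1) := by
    intro s
    obtain ⟨k, hk⟩ := (httop.eventually_gt_atTop s).exists
    exact ⟨k, lt_of_lt_of_le hk (htmono.monotone (Nat.le_succ k))⟩
  set K0 : ℝ → ℕ := fun s => Nat.find (hex s) with hK0def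
  have hK0a : ∀ s, s < t (K0 s + 1) := fun s => Nat.find_spec (hex s)
  have hK0b : ∀ s, 0 ≤ s → t (K0 s) ≤ s := by
    intro s hs
    rcases hk : K0 s with _ | k
    · rw [ht0]; exact hs
    · have hmin := Nat.find_min (hex s) (show k < K0 s by omega)
      push_neg at hmin
      exact hmin
  have hK0c : ∀ s K, t K ≤ s → K ≤ K0 s := by
    intro s K hK
    by_contra hcon
    push_neg at hcon
    have : t (K0 s + 1) ≤ t K := htmono.monotone (by omega)
    have := hK0a s
    linarith
  -- main bound for intermediate times
  have hmain : ∀ s : ℝ, 0 ≤ s →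
      cmin * (x s ⬝ᵥ x s) ≤ Cmax * (x (t (K0 s)) ⬝ᵥ x (t (K0 s))) := by
    intro s hs
    set k := K0 s with hk
    set i := ι k with hi
    set v := x (t k) with hv
    have hxs : x s = NormedSpace.exp ((s - t k) • A i) *ᵥ v :=
      htraj k s ⟨hK0b s hs, (hK0a s).le⟩
    have c1 : cmin * (x s ⬝ᵥ x s) ≤ x s ⬝ᵥ (P i *ᵥ x s) :=
      le_trans (mul_le_mul_of_nonneg_right (hcmin_le i) (dot_self_nonneg _)) (hcP2 i _)
    have hanti := flow_antitone (A i) (P i) (h1 i) v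
    have c2 : x s ⬝ᵥ (P i *ᵥ x s)
        ≤ (NormedSpace.exp ((0:ℝ) • A i) *ᵥ v) ⬝ᵥ (P i *ᵥ (NormedSpace.exp ((0:ℝ) • A i) *ᵥ v)) := by
      rw [hxs]
      exact hanti (by linarith [hK0b s hs] : (0:ℝ) ≤ s - t k)
    have c3 : (NormedSpace.exp ((0:ℝ) • A i) *ᵥ v) ⬝ᵥ (P i *ᵥ (NormedSpace.exp ((0:ℝ) • A i) *ᵥ v))
        = v ⬝ᵥ (P i *ᵥ v) := by
      simp [NormedSpace.exp_zero]
    have c4 : v ⬝ᵥ (P i *ᵥ v) ≤ Cmax * (v ⬝ᵥ v) :=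
      le_trans (hCP2 i v) (mul_le_mul_of_nonneg_right (hCmax_le i) (dot_self_nonneg _))
    calc cmin * (x s ⬝ᵥ x s) ≤ x s ⬝ᵥ (P i *ᵥ x s) := c1
    _ ≤ _ := c2
    _ = v ⬝ᵥ (P i *ᵥ v) := c3
    _ ≤ Cmax * (v ⬝ᵥ v) := c4
  -- q s → 0
  have hqx : Tendsto (fun s => x s ⬝ᵥ x s) atTop (𝓝 0) := by
    rw [Metric.tendsto_atTop]
    intro ε' hε'
    have hpos : 0 < cmin * ε' / (Cmax + 1) := by positivity
    obtain ⟨K, hK⟩ := (Metric.tendsto_atTop.1 hq) (cmin * ε' / (Cmax + 1)) hpos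
    refine ⟨max (t K) 0, fun s hs => ?_⟩
    have hs0 : (0:ℝ) ≤ s := le_trans (le_max_right _ _) hs
    have hstK : t K ≤ s := le_trans (le_max_left _ _) hs
    have hk0 : K ≤ K0 s := hK0c s K hstK
    have hKb := hK (K0 s) hk0
    rw [Real.dist_eq, sub_zero, abs_of_nonneg (dot_self_nonneg _)] at hKb
    have hb1 := hmain s hs0
    have hC1 : Cmax * (x (t (K0 s)) ⬝ᵥ x (t (K0 s))) ≤ (Cmax + 1) * (x (t (K0 s)) ⬝ᵥ x (t (K0 s))) := by
      nlinarith [dot_self_nonneg (x (t (K0 s)))]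
    have hC2 : (Cmax + 1) * (x (t (K0 s)) ⬝ᵥ x (t (K0 s))) < (Cmax + 1) * (cmin * ε' / (Cmax + 1)) := by
      apply mul_lt_mul_of_pos_left hKb (by linarith)
    have hC3 : (Cmax + 1) * (cmin * ε' / (Cmax + 1)) = cmin * ε' := by
      field_simp
    rw [Real.dist_eq, sub_zero, abs_of_nonneg (dot_self_nonneg _)]
    have : cmin * (x s ⬝ᵥ x s) < cmin * ε' := by linarith
    exact lt_of_mul_lt_mul_left this hcmin_pos.le
  -- conclude componentwise
  rw [tendsto_pi_nhds]
  intro a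
  have hsqrt : Tendsto (fun s => Real.sqrt (x s ⬝ᵥ x s)) atTop (𝓝 0) := by
    have := (Real.continuous_sqrt.tendsto 0).comp hqx
    simp only [Real.sqrt_zero] at this
    exact this
  apply squeeze_zero_norm _ hsqrt
  intro s
  have h1' : (x s a) ^ 2 ≤ x s ⬝ᵥ x s := by
    rw [dotProduct, pow_two]
    exact Finset.single_le_sum (fun b _ => mul_self_nonneg (x s b)) (Finset.mem_univ a)
  calc ‖x s a‖ = Real.sqrt ((x s a) ^ 2) := by rw [Real.sqrt_sq_eq_abs, Real.norm_eq_abs]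
  _ ≤ Real.sqrt (x s ⬝ᵥ x s) := Real.sqrt_le_sqrt h1'

/-- Theorem 5: minimum dwell-time for uncertain switched systems
with norm-bounded uncertainty `𝒜ᵢ = {Fᵢ + Uᵢ Δ Vᵢ : ‖Δ‖₂ ≤ 1}`. -/
theorem uncertain_min_dwell_time
    (n N p q : ℕ) (hn : 1 ≤ n) (hN : 2 ≤ N) (hp : 1 ≤ p) (hq : 1 ≤ q)
    (F : Fin N → Matrix (Fin n) (Fin n) ℝ)
    (U : Fin N → Matrix (Fin n) (Fin p) ℝ)
    (V : Fin N → Matrix (Fin q) (Fin n) ℝ)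
    (T ε : ℝ) (hT : 0 < T) (hε : 0 < ε)
    (μ : Fin N → ℝ) (hμ : ∀ i, 0 < μ i)
    (P : Fin N → Matrix (Fin n) (Fin n) ℝ)
    (hPsymm : ∀ i, (P i).IsSymm)
    (hPpos : ∀ i, (P i).PosDef)
    (μij : Fin N → Fin N → ℝ → ℝ)
    (hμij : ∀ i j, i ≠ j → ∀ τ ∈ Set.Icc (0 : ℝ) T, 0 ≤ μij i j τ)
    (hμijcont : ∀ i j, i ≠ j → ContinuousOn (μij i j) (Set.Icc (0 : ℝ) T))
    (Z Z' : Fin N → Fin N → ℝ →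
      Matrix (Fin n ⊕ (Fin n ⊕ Fin n)) (Fin n ⊕ (Fin n ⊕ Fin n)) ℝ)
    (hZsymm : ∀ i j, i ≠ j → ∀ τ ∈ Set.Icc (0 : ℝ) T, (Z i j τ).IsSymm)
    (hZderiv : ∀ i j, i ≠ j → ∀ τ ∈ Set.Icc (0 : ℝ) T, ∀ a b,
      HasDerivAt (fun s => Z i j s a b) (Z' i j τ a b) τ)
    (hZ'cont : ∀ i j, i ≠ j → ContinuousOn (Z' i j) (Set.Icc (0 : ℝ) T))
    -- looping (boundary) condition
    (hloop : ∀ i j, i ≠ j →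
      (Y2 n)ᵀ * Z i j T * Y2 n - (Y1 n)ᵀ * Z i j 0 * Y1 n = 0)
    -- robust continuous-time LMI conditions (i)
    (hcontLMI : ∀ i,
      (-(Matrix.fromBlocks
          ((F i)ᵀ * P i + P i * F i + μ i • ((V i)ᵀ * V i)) (P i * U i)
          ((U i)ᵀ * P i) (-(μ i • (1 : Matrix (Fin p) (Fin p) ℝ))))).PosDef)
    -- robust infinite-dimensional LMI conditions (ii)
    (hLMI : ∀ i j, i ≠ j → ∀ τ ∈ Set.Icc (0 : ℝ) T,
      (-(Matrix.fromBlocks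
          (Psi T ε (F i) (P i) (P j) + He (Z i j τ * Dn (F i))
            + Dn (μij i j τ • ((V i)ᵀ * V i)) + Z' i j τ)
          (Matrix.fromRows ((blk11 (Z i j τ) + T • P i) * U i)
            (Matrix.fromRows (blk21 (Z i j τ) * U i) (blk31 (Z i j τ) * U i)))
          (Matrix.fromRows ((blk11 (Z i j τ) + T • P i) * U i)
            (Matrix.fromRows (blk21 (Z i j τ) * U i) (blk31 (Z i j τ) * U i)))ᵀ
          (-(μij i j τ • (1 : Matrix (Fin p) (Fin p) ℝ))))).PosSemidef) :
    ∀ A : Fin N → Matrix (Fin n) (Fin n) ℝ,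
      (∀ i, ∃ Δ : Matrix (Fin p) (Fin q) ℝ, SpecNormLEOne Δ ∧ A i = F i + U i * Δ * V i) →
      -- the conditions of Theorem 1 hold for every admissible `A`
      ((∀ i, (-((A i)ᵀ * P i + P i * A i)).PosDef) ∧
       (∀ i j, i ≠ j →
         (-(NormedSpace.exp (T • (A i)ᵀ) * P i * NormedSpace.exp (T • A i)
            - P j)).PosDef) ∧
      -- and consequently the switched system is globally asymptotically stable
      -- over all switching sequences with minimum dwell-time `T`
      (∀ (t : ℕ → ℝ), t 0 = 0 → StrictMono t → Tendsto t atTop atTop →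
       ∀ (ι : ℕ → Fin N), (∀ k, ι (k + 1) ≠ ι k) → (∀ k, T ≤ t (k + 1) - t k) →
       ∀ (x0 : Fin n → ℝ) (x : ℝ → Fin n → ℝ), x (t 0) = x0 →
        (∀ k, ∀ s ∈ Set.Icc (t k) (t (k + 1)),
          x s = NormedSpace.exp ((s - t k) • A (ι k)) *ᵥ x (t k)) →
        Tendsto x atTop (𝓝 0))) := by
  intro A hAmem
  have h1 : ∀ i, (-((A i)ᵀ * P i + P i * A i)).PosDef := by
    intro i
    obtain ⟨Δ, hΔ, hAeq⟩ := hAmem i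
    rw [hAeq]
    exact part1 (F i) (U i) (V i) (μ i) (hμ i) (P i) (hPsymm i) (hcontLMI i) Δ hΔ
  have h2 : ∀ i j, i ≠ j →
      (-(NormedSpace.exp (T • (A i)ᵀ) * P i * NormedSpace.exp (T • A i) - P j)).PosDef := by
    intro i j hij
    obtain ⟨Δ, hΔ, hAeq⟩ := hAmem i
    rw [hAeq]
    exact part2 (F i) (U i) (V i) T ε hT hε (P i) (P j)
      (hPsymm i) (hPsymm j) (μij i j) (hμij i j hij)
      (Z i j) (Z' i j) (hZsymm i j hij) (hZderiv i j hij) (hloop i j hij)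
      (hLMI i j hij) Δ hΔ
  refine ⟨h1, h2, ?_⟩
  intro t ht0 htmono httop ι hι hdwell x0 x hx0 htraj
  exact part3 hn (by omega) T hT A P hPpos h1 h2 t ht0 htmono httop ι hι
    (fun k => hdwell k) x (fun k s hs => htraj k s hs)
end

section
/- Let A be a real n×n matrix and P, Q symmetric positive definite n×n matrices such that A^T P + P A ≺ 0 and exp(A^T T̄) P exp(A T̄) − Q ≺ 0 for some T̄ > 0. Then for every T ≥ T̄ one has exp(A^T T) P exp(A T) − Q ≺ 0. -/
open Matrix

attribute [local instance] Matrix.linftyOpNormedRing Matrix.linftyOpNormedAlgebra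
  Matrix.linftyOpNormedAddCommGroup Matrix.linftyOpNormedSpace

noncomputable def quadCLM (n : ℕ) (x : Fin n → ℝ) :
    Matrix (Fin n) (Fin n) ℝ →L[ℝ] ℝ :=
  LinearMap.toContinuousLinearMap
    { toFun := fun M => x ⬝ᵥ (M *ᵥ x)
      map_add' := by intro M N; simp [Matrix.add_mulVec, dotProduct_add]
      map_smul' := by intro c M; simp [Matrix.smul_mulVec, dotProduct_smul] }

@[simp] lemma quadCLM_apply (n : ℕ) (x : Fin n → ℝ) (M : Matrix (Fin n) (Fin n) ℝ) :
    quadCLM n x M = x ⬝ᵥ (M *ᵥ x) := rfl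

/-- if `Aᵀ P + P A ≺ 0` and `exp(Aᵀ T̄) P exp(A T̄) − Q ≺ 0`
for some `T̄ > 0`, then `exp(Aᵀ T) P exp(A T) − Q ≺ 0` for every `T ≥ T̄`. -/
theorem discrete_condition_monotone_in_dwell_time
    (n : ℕ) (A P Q : Matrix (Fin n) (Fin n) ℝ)
    (hPsymm : P.IsSymm) (hPpos : P.PosDef)
    (hQsymm : Q.IsSymm) (hQpos : Q.PosDef)
    (hcont : (-(Aᵀ * P + P * A)).PosDef)
    (T₀ : ℝ) (hT₀ : 0 < T₀)
    (hdisc : (-(NormedSpace.exp (T₀ • Aᵀ) * P * NormedSpace.exp (T₀ • A) - Q)).PosDef) :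
    ∀ T : ℝ, T₀ ≤ T →
      (-(NormedSpace.exp (T • Aᵀ) * P * NormedSpace.exp (T • A) - Q)).PosDef := by
  intro T hT
  -- exp of transpose
  have hTrans : ∀ t : ℝ, NormedSpace.exp (t • Aᵀ) = (NormedSpace.exp (t • A))ᵀ := by
    intro t
    rw [← Matrix.transpose_smul, Matrix.exp_transpose]
  refine Matrix.posDef_iff_dotProduct_mulVec.mpr ⟨?_, ?_⟩
  · -- Hermitian
    have hP' : Pᵀ = P := hPsymm
    have hQ' : Qᵀ = Q := hQsymm
    simp only [Matrix.IsHermitian, Matrix.conjTranspose, map_id, hTrans]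
    ext i j
    simp [Matrix.transpose_mul, Matrix.transpose_transpose, hP', hQ', Matrix.mul_assoc]
  · intro x hx
    have hstar : star x = x := by simp
    rw [hstar]
    -- The scalar function
    set f : ℝ → ℝ := fun t =>
      x ⬝ᵥ ((NormedSpace.exp (t • Aᵀ) * P * NormedSpace.exp (t • A)) *ᵥ x) with hf
    -- derivative of f
    have hderiv : ∀ t : ℝ, HasDerivAt f
        ((NormedSpace.exp (t • A) *ᵥ x) ⬝ᵥ ((Aᵀ * P + P * A) *ᵥ
          (NormedSpace.exp (t • A) *ᵥ x))) t := by
      intro t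
      set B := NormedSpace.exp (t • A) with hB
      have hcomm : A * B = B * A := by
        have : Commute (t • A) A := (Commute.refl A).smul_left t
        exact (this.exp_left).symm
      have h1 : HasDerivAt (fun u : ℝ => NormedSpace.exp (u • A))
          (A * B) t := hasDerivAt_exp_smul_const' A t
      have h1t : HasDerivAt (fun u : ℝ => NormedSpace.exp (u • Aᵀ))
          (Aᵀ * Bᵀ) t := by
        have := hasDerivAt_exp_smul_const' Aᵀ t
        erw [hTrans t] at this
        exact this
      have hM : HasDerivAt (fun u : ℝ =>
          NormedSpace.exp (u • Aᵀ) * P * NormedSpace.exp (u • A))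
          ((Aᵀ * Bᵀ * P) * B + (NormedSpace.exp (t • Aᵀ) * P) * (A * B)) t := by
        exact ((h1t.mul_const P).mul h1)
      have hMf := (quadCLM n x).hasFDerivAt.comp_hasDerivAt t hM
      have key : quadCLM n x ((Aᵀ * Bᵀ * P) * B + (NormedSpace.exp (t • Aᵀ) * P) * (A * B))
          = (B *ᵥ x) ⬝ᵥ ((Aᵀ * P + P * A) *ᵥ (B *ᵥ x)) := by
        rw [quadCLM_apply, hTrans t, ← hB]
        have e1 : (Aᵀ * Bᵀ * P * B) *ᵥ x = Aᵀ *ᵥ (Bᵀ *ᵥ (P *ᵥ (B *ᵥ x))) := by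
          simp [Matrix.mulVec_mulVec, Matrix.mul_assoc]
        have e2 : (Bᵀ * P * (A * B)) *ᵥ x = Bᵀ *ᵥ (P *ᵥ (A *ᵥ (B *ᵥ x))) := by
          simp [Matrix.mulVec_mulVec, Matrix.mul_assoc]
        rw [Matrix.add_mulVec, dotProduct_add, e1, e2,
          Matrix.add_mulVec, dotProduct_add]
        congr 1
        · rw [Matrix.dotProduct_mulVec x Aᵀ, Matrix.dotProduct_mulVec _ Bᵀ,
            Matrix.vecMul_transpose, Matrix.vecMul_transpose, Matrix.mulVec_mulVec, ← hcomm]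
          conv_rhs => rw [← Matrix.mulVec_mulVec, Matrix.dotProduct_mulVec (B *ᵥ x) Aᵀ,
            Matrix.vecMul_transpose, Matrix.mulVec_mulVec]
        · rw [Matrix.dotProduct_mulVec x Bᵀ, Matrix.vecMul_transpose]
          conv_rhs => rw [← Matrix.mulVec_mulVec]
      rw [← key]
      exact hMf
    -- y t ≠ 0
    have hy : ∀ t : ℝ, NormedSpace.exp (t • A) *ᵥ x ≠ 0 := by
      intro t h0
      apply hx
      have hu : IsUnit (NormedSpace.exp (t • A)).det :=
        (Matrix.isUnit_iff_isUnit_det _).mp (Matrix.isUnit_exp (t • A))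
      have := congrArg (fun v => (NormedSpace.exp (t • A))⁻¹ *ᵥ v) h0
      simpa [Matrix.mulVec_mulVec, Matrix.nonsing_inv_mul _ hu] using this
    -- f is strictly decreasing
    have hanti : StrictAnti f := by
      apply strictAnti_of_deriv_neg
      intro t
      rw [(hderiv t).deriv]
      set y := NormedSpace.exp (t • A) *ᵥ x
      have := (Matrix.posDef_iff_dotProduct_mulVec.mp hcont).2 (hy t)
      rw [Matrix.neg_mulVec, dotProduct_neg] at this
      have hs : star y = y := by simp
      rw [hs] at this
      linarith
    have hle : f T ≤ f T₀ := hanti.antitone hT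
    -- conclude
    have hd := (Matrix.posDef_iff_dotProduct_mulVec.mp hdisc).2 hx
    rw [hstar] at hd
    have e : ∀ t : ℝ, x ⬝ᵥ ((-(NormedSpace.exp (t • Aᵀ) * P * NormedSpace.exp (t • A) - Q)) *ᵥ x)
        = x ⬝ᵥ (Q *ᵥ x) - f t := by
      intro t
      rw [neg_sub, Matrix.sub_mulVec, dotProduct_sub]
    rw [e] at hd ⊢
    linarith
end

section
/- Let T̄ > 0, ε > 0, let P_i, P_j be symmetric positive definite n×n matrices, A_i a real n×n matrix, and Z : [0, T̄] → S^{3n} a continuously differentiable symmetric matrix function such that Ψ_{ij}(T̄) + He(Z(τ) D_n(A_i)) + Z'(τ) ⪯ 0 for all τ ∈ [0, T̄]. Then for every x_0 ∈ ℝ^n, with x(τ) = exp(A_i τ) x_0 and ξ(τ) = (x(τ), x_0, x(T̄)) ∈ ℝ^{3n}, the function τ ↦ T̄ · x(τ)^T P_i x(τ) + ξ(τ)^T Z(τ) ξ(τ) + τ · x_0^T (P_i − P_j + ε I_n) x_0 is nonincreasing on [0, T̄]. -/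
open Matrix

section aux
attribute [local instance] Matrix.linftyOpNormedAddCommGroup Matrix.linftyOpNormedRing
  Matrix.linftyOpNormedAlgebra

lemma hasDerivAt_exp_mulVec {n : ℕ} (Ai : Matrix (Fin n) (Fin n) ℝ) (x0 : Fin n → ℝ) (τ : ℝ) :
    HasDerivAt (fun s : ℝ => NormedSpace.exp (s • Ai) *ᵥ x0)
      (Ai *ᵥ (NormedSpace.exp (τ • Ai) *ᵥ x0)) τ := by
  have h := hasDerivAt_exp_smul_const' (𝕂 := ℝ) Ai τ
  let L : Matrix (Fin n) (Fin n) ℝ →ₗ[ℝ] (Fin n → ℝ) :=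
    { toFun := fun M => M *ᵥ x0
      map_add' := fun M N => Matrix.add_mulVec M N x0
      map_smul' := fun c M => Matrix.smul_mulVec c M x0 }
  have hL := (L.toContinuousLinearMap.hasFDerivAt
    (x := NormedSpace.exp (τ • Ai))).comp_hasDerivAt τ h
  rw [Matrix.mulVec_mulVec]
  exact hL

end aux

lemma hasDerivAt_quad {N : Type*} [Fintype N] {u v : ℝ → N → ℝ} {M : ℝ → Matrix N N ℝ}
    {u' v' : N → ℝ} {M' : Matrix N N ℝ} {τ : ℝ}
    (hu : ∀ a, HasDerivAt (fun s => u s a) (u' a) τ)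
    (hM : ∀ a b, HasDerivAt (fun s => M s a b) (M' a b) τ)
    (hv : ∀ b, HasDerivAt (fun s => v s b) (v' b) τ) :
    HasDerivAt (fun s => u s ⬝ᵥ (M s *ᵥ v s))
      (u' ⬝ᵥ (M τ *ᵥ v τ) + u τ ⬝ᵥ (M' *ᵥ v τ) + u τ ⬝ᵥ (M τ *ᵥ v')) τ := by
  have key : ∀ s, u s ⬝ᵥ (M s *ᵥ v s) = ∑ a, ∑ b, u s a * (M s a b * v s b) := by
    intro s; simp [dotProduct, mulVec, Finset.mul_sum]
  have h : HasDerivAt (fun s => ∑ a : N, ∑ b : N, u s a * (M s a b * v s b))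
      (∑ a : N, ∑ b : N, (u' a * (M τ a b * v τ b)
        + u τ a * (M' a b * v τ b + M τ a b * v' b))) τ := by
    apply HasDerivAt.fun_sum; intro a _
    apply HasDerivAt.fun_sum; intro b _
    exact (hu a).mul ((hM a b).mul (hv b))
  have hfun : (fun s => u s ⬝ᵥ (M s *ᵥ v s))
      = fun s => ∑ a : N, ∑ b : N, u s a * (M s a b * v s b) := funext key
  rw [hfun]
  convert h using 1
  simp [dotProduct, mulVec, Finset.mul_sum, Finset.sum_add_distrib, mul_add]
  ring

/-- under the LMI condition
`Ψᵢⱼ(T̄) + He(Z(τ) Dₙ(Aᵢ)) + Z'(τ) ⪯ 0` on `[0, T̄]`, the looped functional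
`τ ↦ T̄·x(τ)ᵀ Pᵢ x(τ) + ξ(τ)ᵀ Z(τ) ξ(τ) + τ·x₀ᵀ(Pᵢ − Pⱼ + ε I)x₀`
is nonincreasing on `[0, T̄]`, where `x(τ) = exp(Aᵢ τ) x₀` and
`ξ(τ) = (x(τ), x₀, x(T̄))`. -/
theorem looped_functional_nonincreasing
    (n : ℕ) (T ε : ℝ) (hT : 0 < T) (hε : 0 < ε)
    (Pi Pj Ai : Matrix (Fin n) (Fin n) ℝ)
    (hPisymm : Pi.IsSymm) (hPipos : Pi.PosDef)
    (hPjsymm : Pj.IsSymm) (hPjpos : Pj.PosDef)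
    (Z Z' : ℝ → Matrix (Fin n ⊕ (Fin n ⊕ Fin n)) (Fin n ⊕ (Fin n ⊕ Fin n)) ℝ)
    (hZsymm : ∀ τ ∈ Set.Icc (0 : ℝ) T, (Z τ).IsSymm)
    (hZderiv : ∀ τ ∈ Set.Icc (0 : ℝ) T, ∀ a b,
      HasDerivAt (fun s => Z s a b) (Z' τ a b) τ)
    (hZ'cont : ContinuousOn Z' (Set.Icc (0 : ℝ) T))
    (hLMI : ∀ τ ∈ Set.Icc (0 : ℝ) T,
      (-(Psi T ε Ai Pi Pj + He (Z τ * Dn Ai) + Z' τ)).PosSemidef) :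
    ∀ x0 : Fin n → ℝ,
      AntitoneOn (fun τ : ℝ =>
        let x : ℝ → Fin n → ℝ := fun s => NormedSpace.exp (s • Ai) *ᵥ x0
        let ξ : Fin n ⊕ (Fin n ⊕ Fin n) → ℝ := Sum.elim (x τ) (Sum.elim x0 (x T))
        T * (x τ ⬝ᵥ (Pi *ᵥ x τ)) + ξ ⬝ᵥ (Z τ *ᵥ ξ)
          + τ * (x0 ⬝ᵥ ((Pi - Pj + ε • (1 : Matrix (Fin n) (Fin n) ℝ)) *ᵥ x0)))
        (Set.Icc (0 : ℝ) T) := by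
  intro x0
  set xf : ℝ → Fin n → ℝ := fun s => NormedSpace.exp (s • Ai) *ᵥ x0 with hxf
  set c : ℝ := x0 ⬝ᵥ ((Pi - Pj + ε • (1 : Matrix (Fin n) (Fin n) ℝ)) *ᵥ x0) with hc
  set ξ : ℝ → (Fin n ⊕ (Fin n ⊕ Fin n)) → ℝ :=
    fun s => Sum.elim (xf s) (Sum.elim x0 (xf T)) with hξ
  set F : ℝ → ℝ := fun τ => T * (xf τ ⬝ᵥ (Pi *ᵥ xf τ)) + ξ τ ⬝ᵥ (Z τ *ᵥ ξ τ) + τ * c with hF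
  set F' : ℝ → ℝ := fun τ =>
    ξ τ ⬝ᵥ ((Psi T ε Ai Pi Pj + He (Z τ * Dn Ai) + Z' τ) *ᵥ ξ τ) with hF'
  have hderiv : ∀ τ ∈ Set.Icc (0 : ℝ) T, HasDerivAt F (F' τ) τ := by
    intro τ hτ
    have hx : HasDerivAt xf (Ai *ᵥ xf τ) τ := hasDerivAt_exp_mulVec Ai x0 τ
    have hxa : ∀ a, HasDerivAt (fun s => xf s a) ((Ai *ᵥ xf τ) a) τ :=
      hasDerivAt_pi.1 hx
    set ξ'τ : (Fin n ⊕ (Fin n ⊕ Fin n)) → ℝ := Sum.elim (Ai *ᵥ xf τ) 0 with hξ'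
    have hξa : ∀ a, HasDerivAt (fun s => ξ s a) (ξ'τ a) τ := by
      rintro (a | a)
      · exact hxa a
      · exact hasDerivAt_const τ _
    have h1 : HasDerivAt (fun s => xf s ⬝ᵥ (Pi *ᵥ xf s))
        ((Ai *ᵥ xf τ) ⬝ᵥ (Pi *ᵥ xf τ) + xf τ ⬝ᵥ ((0 : Matrix (Fin n) (Fin n) ℝ) *ᵥ xf τ)
          + xf τ ⬝ᵥ (Pi *ᵥ (Ai *ᵥ xf τ))) τ :=
      hasDerivAt_quad hxa (fun a b => hasDerivAt_const τ _) hxa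
    have h2 : HasDerivAt (fun s => ξ s ⬝ᵥ (Z s *ᵥ ξ s))
        (ξ'τ ⬝ᵥ (Z τ *ᵥ ξ τ) + ξ τ ⬝ᵥ (Z' τ *ᵥ ξ τ) + ξ τ ⬝ᵥ (Z τ *ᵥ ξ'τ)) τ :=
      hasDerivAt_quad hξa (hZderiv τ hτ) hξa
    have h3 : HasDerivAt (fun s : ℝ => s * c) c τ := by
      simpa using (hasDerivAt_id τ).mul_const c
    have hD : HasDerivAt F
        (T * ((Ai *ᵥ xf τ) ⬝ᵥ (Pi *ᵥ xf τ) + xf τ ⬝ᵥ ((0 : Matrix (Fin n) (Fin n) ℝ) *ᵥ xf τ)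
            + xf τ ⬝ᵥ (Pi *ᵥ (Ai *ᵥ xf τ)))
          + (ξ'τ ⬝ᵥ (Z τ *ᵥ ξ τ) + ξ τ ⬝ᵥ (Z' τ *ᵥ ξ τ) + ξ τ ⬝ᵥ (Z τ *ᵥ ξ'τ)) + c) τ :=
      ((h1.const_mul T).add h2).add h3
    have hDn : Dn Ai *ᵥ ξ τ = ξ'τ := by
      funext a
      cases a with
      | inl i => simp [Dn, hξ, hξ', Matrix.mulVec, Matrix.fromBlocks, dotProduct,
          Fintype.sum_sum_type]
      | inr i => cases i <;> simp [Dn, hξ, hξ', Matrix.mulVec, Matrix.fromBlocks, dotProduct,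
          Fintype.sum_sum_type]
    have hPsi : ξ τ ⬝ᵥ (Psi T ε Ai Pi Pj *ᵥ ξ τ)
        = T * ((Ai *ᵥ xf τ) ⬝ᵥ (Pi *ᵥ xf τ) + xf τ ⬝ᵥ (Pi *ᵥ (Ai *ᵥ xf τ))) + c := by
      rw [hξ]
      simp only [Psi, Matrix.fromBlocks_mulVec, Matrix.zero_mulVec, add_zero, zero_add,
        sumElim_dotProduct_sumElim, Matrix.add_mulVec, Matrix.smul_mulVec,
        dotProduct_smul, dotProduct_add, dotProduct_zero, ← Matrix.mulVec_mulVec,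
        smul_eq_mul, hc]
      simp only [Sum.elim_comp_inl, Sum.elim_comp_inr]
      rw [show (xf τ) ⬝ᵥ (Aiᵀ *ᵥ (Pi *ᵥ xf τ)) = (Ai *ᵥ xf τ) ⬝ᵥ (Pi *ᵥ xf τ) by
        rw [Matrix.dotProduct_mulVec, Matrix.vecMul_transpose]]
    have hZsymm' : (Z τ)ᵀ = Z τ := hZsymm τ hτ
    have hsym : ∀ w : (Fin n ⊕ (Fin n ⊕ Fin n)) → ℝ,
        w ⬝ᵥ (Z τ *ᵥ ξ τ) = ξ τ ⬝ᵥ (Z τ *ᵥ w) := by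
      intro w
      calc w ⬝ᵥ (Z τ *ᵥ ξ τ) = (w ᵥ* (Z τ)ᵀᵀ) ⬝ᵥ ξ τ := by
            rw [Matrix.dotProduct_mulVec, Matrix.transpose_transpose]
        _ = ((Z τ)ᵀ *ᵥ w) ⬝ᵥ ξ τ := by rw [Matrix.vecMul_transpose]
        _ = ξ τ ⬝ᵥ (Z τ *ᵥ w) := by rw [hZsymm', dotProduct_comm]
    have hHe : ξ τ ⬝ᵥ (He (Z τ * Dn Ai) *ᵥ ξ τ)
        = ξ'τ ⬝ᵥ (Z τ *ᵥ ξ τ) + ξ τ ⬝ᵥ (Z τ *ᵥ ξ'τ) := by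
      simp only [He, Matrix.add_mulVec, dotProduct_add, ← Matrix.mulVec_mulVec, hDn]
      rw [show ξ τ ⬝ᵥ ((Z τ * Dn Ai)ᵀ *ᵥ ξ τ) = ξ'τ ⬝ᵥ (Z τ *ᵥ ξ τ) by
        rw [Matrix.dotProduct_mulVec, Matrix.vecMul_transpose, ← Matrix.mulVec_mulVec, hDn,
          dotProduct_comm, hsym]]
      rw [hsym]
    have hval : T * ((Ai *ᵥ xf τ) ⬝ᵥ (Pi *ᵥ xf τ)
          + xf τ ⬝ᵥ ((0 : Matrix (Fin n) (Fin n) ℝ) *ᵥ xf τ)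
          + xf τ ⬝ᵥ (Pi *ᵥ (Ai *ᵥ xf τ)))
        + (ξ'τ ⬝ᵥ (Z τ *ᵥ ξ τ) + ξ τ ⬝ᵥ (Z' τ *ᵥ ξ τ) + ξ τ ⬝ᵥ (Z τ *ᵥ ξ'τ)) + c = F' τ := by
      rw [hF']
      simp only [Matrix.add_mulVec, dotProduct_add, hPsi, hHe, Matrix.zero_mulVec,
        dotProduct_zero]
      ring
    exact hval ▸ hD
  have hgoal : AntitoneOn F (Set.Icc (0 : ℝ) T) := by
    apply antitoneOn_of_deriv_nonpos (convex_Icc 0 T)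
    · exact fun τ hτ => (hderiv τ hτ).continuousAt.continuousWithinAt
    · rw [interior_Icc]
      exact fun τ hτ => ((hderiv τ (Set.Ioo_subset_Icc_self hτ)).differentiableAt).differentiableWithinAt
    · intro τ hτ
      rw [interior_Icc] at hτ
      have hτ' := Set.Ioo_subset_Icc_self hτ
      rw [(hderiv τ hτ').deriv]
      have hps := (hLMI τ hτ').dotProduct_mulVec_nonneg (ξ τ)
      simp only [Matrix.neg_mulVec, dotProduct_neg, RCLike.star_def, star_trivial] at hps
      rw [hF']
      set M := Psi T ε Ai Pi Pj + He (Z τ * Dn Ai) + Z' τ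
      linarith [hps]
  exact hgoal
end

section
/- Let 0 < T_i^min < T_i^max < ∞ for each i ∈ {1,…,N}, and let P_1, …, P_N be symmetric positive definite n×n matrices such that exp(A_i^T T) P_i exp(A_i T) − P_j ≺ 0 for all i ≠ j and all T ∈ [T_i^min, T_i^max]. Then there exists ρ ∈ (0, 1) such that for all i ≠ j, all T ∈ [T_i^min, T_i^max] and all x ∈ ℝ^n: (exp(A_i T) x)^T P_i (exp(A_i T) x) ≤ ρ · x^T P_j x. Consequently, along any trajectory of the switched system with dwell-times t_{k+1} − t_k ∈ [T^min_{i_k}, T^max_{i_k}], the values x(t_{k+1})^T P_{i_k} x(t_{k+1}) decay geometrically and x(t_k) → 0 as k → ∞. -/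
open Matrix Filter Topology

section Aux

variable {n : ℕ}

private lemma aux_continuous_exp_smul (A : Matrix (Fin n) (Fin n) ℝ) :
    Continuous fun t : ℝ => NormedSpace.exp (t • A) := by
  letI : NormedRing (Matrix (Fin n) (Fin n) ℝ) := Matrix.linftyOpNormedRing
  letI : NormedAlgebra ℝ (Matrix (Fin n) (Fin n) ℝ) := Matrix.linftyOpNormedAlgebra
  letI : NormedAlgebra ℚ (Matrix (Fin n) (Fin n) ℝ) := NormedAlgebra.restrictScalars ℚ ℝ _
  exact NormedSpace.exp_continuous.comp (continuous_id.smul continuous_const)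

private lemma aux_quad_smul (M : Matrix (Fin n) (Fin n) ℝ) (c : ℝ) (u : Fin n → ℝ) :
    (c • u) ⬝ᵥ (M *ᵥ (c • u)) = c ^ 2 * (u ⬝ᵥ (M *ᵥ u)) := by
  rw [Matrix.mulVec_smul, smul_dotProduct, dotProduct_smul]
  simp only [smul_eq_mul]; ring

private lemma aux_continuous_quad₂ {f : ℝ → Matrix (Fin n) (Fin n) ℝ} (hf : Continuous f) :
    Continuous fun p : ℝ × (Fin n → ℝ) => p.2 ⬝ᵥ (f p.1 *ᵥ p.2) := by
  simp only [dotProduct, Matrix.mulVec]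
  apply continuous_finset_sum
  intro i _
  refine ((continuous_apply i).comp continuous_snd).mul ?_
  apply continuous_finset_sum
  intro j _
  exact ((continuous_apply j).comp ((continuous_apply i).comp
    (hf.comp continuous_fst))).mul ((continuous_apply j).comp continuous_snd)

private lemma aux_continuous_quad (M : Matrix (Fin n) (Fin n) ℝ) :
    Continuous fun y : Fin n → ℝ => y ⬝ᵥ (M *ᵥ y) :=
  (aux_continuous_quad₂ (f := fun _ : ℝ => M) continuous_const).comp
    ((continuous_const (y := (0 : ℝ))).prodMk continuous_id)

private lemma aux_trans_quad (E Pm : Matrix (Fin n) (Fin n) ℝ) (x : Fin n → ℝ) :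
    (E *ᵥ x) ⬝ᵥ (Pm *ᵥ (E *ᵥ x)) = x ⬝ᵥ ((Eᵀ * Pm * E) *ᵥ x) := by
  have h : (Eᵀ * Pm * E) *ᵥ x = Eᵀ *ᵥ (Pm *ᵥ (E *ᵥ x)) := by
    rw [Matrix.mulVec_mulVec, Matrix.mulVec_mulVec, Matrix.mul_assoc]
  rw [h, Matrix.dotProduct_mulVec x, Matrix.vecMul_transpose]

end Aux

/-- if `exp(Aᵢᵀ T) Pᵢ exp(Aᵢ T) − Pⱼ ≺ 0` for all `i ≠ j` and
all `T ∈ [Tᵢ^min, Tᵢ^max]`, then there is a uniform contraction factor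
`ρ ∈ (0,1)` for the quadratic forms, and along any trajectory with
mode-dependent dwell-times the values `x(t_{k+1})ᵀ P_{i_k} x(t_{k+1})` decay
geometrically and `x(t_k) → 0`. -/
theorem mode_dependent_geometric_decay
    (n N : ℕ) (hn : 1 ≤ n) (hN : 2 ≤ N)
    (A : Fin N → Matrix (Fin n) (Fin n) ℝ)
    (Tmin Tmax : Fin N → ℝ)
    (hTmin : ∀ i, 0 < Tmin i) (hTord : ∀ i, Tmin i < Tmax i)
    (P : Fin N → Matrix (Fin n) (Fin n) ℝ)
    (hPsymm : ∀ i, (P i).IsSymm)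
    (hPpos : ∀ i, (P i).PosDef)
    (hdisc : ∀ i j, i ≠ j → ∀ T ∈ Set.Icc (Tmin i) (Tmax i),
      (-(NormedSpace.exp (T • (A i)ᵀ) * P i * NormedSpace.exp (T • A i) - P j)).PosDef) :
    ∃ ρ ∈ Set.Ioo (0 : ℝ) 1,
      -- uniform contraction of the quadratic forms
      (∀ i j, i ≠ j → ∀ T ∈ Set.Icc (Tmin i) (Tmax i), ∀ x : Fin n → ℝ,
        (NormedSpace.exp (T • A i) *ᵥ x) ⬝ᵥ (P i *ᵥ (NormedSpace.exp (T • A i) *ᵥ x))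
          ≤ ρ * (x ⬝ᵥ (P j *ᵥ x))) ∧
      -- geometric decay along every admissible trajectory
      (∀ (t : ℕ → ℝ), t 0 = 0 → StrictMono t → Tendsto t atTop atTop →
       ∀ (ι : ℕ → Fin N), (∀ k, ι (k + 1) ≠ ι k) →
        (∀ k, t (k + 1) - t k ∈ Set.Icc (Tmin (ι k)) (Tmax (ι k))) →
       ∀ (x0 : Fin n → ℝ) (x : ℝ → Fin n → ℝ), x (t 0) = x0 →
        (∀ k, ∀ s ∈ Set.Icc (t k) (t (k + 1)),
          x s = NormedSpace.exp ((s - t k) • A (ι k)) *ᵥ x (t k)) →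
        ((∀ k, x (t (k + 2)) ⬝ᵥ (P (ι (k + 1)) *ᵥ x (t (k + 2)))
            ≤ ρ * (x (t (k + 1)) ⬝ᵥ (P (ι k) *ᵥ x (t (k + 1))))) ∧
         Tendsto (fun k => x (t k)) atTop (𝓝 0))) := by
  haveI : Nonempty (Fin n) := ⟨⟨0, hn⟩⟩
  haveI : Nonempty (Fin N) := ⟨⟨0, by omega⟩⟩
  haveI : Nontrivial (Fin n → ℝ) := inferInstance
  set S : Set (Fin n → ℝ) := Metric.sphere 0 1 with hSdef
  have hSc : IsCompact S := isCompact_sphere 0 1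
  have hSne : S.Nonempty := NormedSpace.sphere_nonempty.mpr zero_le_one
  have hSmem : ∀ u : Fin n → ℝ, u ∈ S ↔ ‖u‖ = 1 := fun u => mem_sphere_zero_iff_norm
  -- a uniform contraction coefficient for each pair of modes
  have key : ∀ p : Fin N × Fin N, ∃ δ : ℝ, 0 < δ ∧ δ < 1 ∧
      (p.1 ≠ p.2 → ∀ T ∈ Set.Icc (Tmin p.1) (Tmax p.1), ∀ x : Fin n → ℝ,
        (NormedSpace.exp (T • A p.1) *ᵥ x) ⬝ᵥ (P p.1 *ᵥ (NormedSpace.exp (T • A p.1) *ᵥ x))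
          ≤ (1 - δ) * (x ⬝ᵥ (P p.2 *ᵥ x))) := by
    rintro ⟨i, j⟩
    by_cases hij : i = j
    · exact ⟨1/2, by norm_num, by norm_num, fun h => absurd hij h⟩
    simp only at hij ⊢
    set f : ℝ → Matrix (Fin n) (Fin n) ℝ :=
      fun T => -(NormedSpace.exp (T • (A i)ᵀ) * P i * NormedSpace.exp (T • A i) - P j)
      with hfdef
    have hfc : Continuous f := by
      apply Continuous.neg
      exact (((aux_continuous_exp_smul _).mul continuous_const).mul
        (aux_continuous_exp_smul _)).sub continuous_const
    have hgc : Continuous fun p : ℝ × (Fin n → ℝ) => p.2 ⬝ᵥ (f p.1 *ᵥ p.2) :=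
      aux_continuous_quad₂ hfc
    have hKc : IsCompact (Set.Icc (Tmin i) (Tmax i) ×ˢ S) := isCompact_Icc.prod hSc
    have hKne : (Set.Icc (Tmin i) (Tmax i) ×ˢ S).Nonempty :=
      (Set.nonempty_Icc.mpr (hTord i).le).prod hSne
    obtain ⟨p₀, hp₀K, hp₀⟩ := hKc.exists_isMinOn hKne hgc.continuousOn
    set m : ℝ := p₀.2 ⬝ᵥ (f p₀.1 *ᵥ p₀.2) with hmdef
    have hmpos : 0 < m := by
      have hx0 : p₀.2 ≠ 0 := by
        have h1 : ‖p₀.2‖ = 1 := (hSmem _).mp hp₀K.2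
        intro h; rw [h] at h1; simp at h1
      have h2 := (hdisc i j hij p₀.1 hp₀K.1).dotProduct_mulVec_pos hx0
      rw [star_trivial] at h2
      exact h2
    obtain ⟨u₀, hu₀S, hu₀⟩ := hSc.exists_isMaxOn hSne (aux_continuous_quad (P j)).continuousOn
    set C : ℝ := u₀ ⬝ᵥ (P j *ᵥ u₀) with hCdef
    have hCpos : 0 < C := by
      have hx0 : u₀ ≠ 0 := by
        have h1 : ‖u₀‖ = 1 := (hSmem _).mp hu₀S
        intro h; rw [h] at h1; simp at h1
      have := (hPpos j).dotProduct_mulVec_pos hx0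
      simpa using this
    refine ⟨min (m / C) (1/2), lt_min (div_pos hmpos hCpos) (by norm_num),
      lt_of_le_of_lt (min_le_right _ _) (by norm_num), fun _ T hT x => ?_⟩
    by_cases hx : x = 0
    · simp [hx]
    · set c : ℝ := ‖x‖ with hcdef
      have hc0 : c ≠ 0 := norm_ne_zero_iff.mpr hx
      set u : Fin n → ℝ := c⁻¹ • x with hudef
      have huS : u ∈ S := by
        rw [hSmem]
        rw [hudef, norm_smul, norm_inv, norm_norm, ← hcdef, inv_mul_cancel₀ hc0]
      have hxcu : x = c • u := by rw [hudef, smul_inv_smul₀ hc0]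
      have hgu : m ≤ u ⬝ᵥ (f T *ᵥ u) := isMinOn_iff.mp hp₀ (T, u) ⟨hT, huS⟩
      have hPu : u ⬝ᵥ (P j *ᵥ u) ≤ C := isMaxOn_iff.mp hu₀ u huS
      have hPu0 : 0 ≤ u ⬝ᵥ (P j *ᵥ u) := by
        simpa using (hPpos j).posSemidef.dotProduct_mulVec_nonneg u
      have hEq : (NormedSpace.exp (T • A i) *ᵥ u) ⬝ᵥ
          (P i *ᵥ (NormedSpace.exp (T • A i) *ᵥ u)) =
          u ⬝ᵥ ((NormedSpace.exp (T • (A i)ᵀ) * P i * NormedSpace.exp (T • A i)) *ᵥ u) := by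
        rw [aux_trans_quad]
        rw [show (NormedSpace.exp (T • A i))ᵀ = NormedSpace.exp (T • (A i)ᵀ) by
          rw [← Matrix.exp_transpose, Matrix.transpose_smul]]
      have hsplit : u ⬝ᵥ (f T *ᵥ u) = u ⬝ᵥ (P j *ᵥ u) -
          u ⬝ᵥ ((NormedSpace.exp (T • (A i)ᵀ) * P i * NormedSpace.exp (T • A i)) *ᵥ u) := by
        rw [hfdef]
        simp only [Matrix.neg_mulVec, Matrix.sub_mulVec, dotProduct_neg,
          dotProduct_sub]
        ring
      -- the scalar inequality at the level of the unit vector u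
      have hquadu : (NormedSpace.exp (T • A i) *ᵥ u) ⬝ᵥ
          (P i *ᵥ (NormedSpace.exp (T • A i) *ᵥ u)) ≤
          (1 - min (m / C) (1/2)) * (u ⬝ᵥ (P j *ᵥ u)) := by
        have h1 : min (m / C) (1/2) * (u ⬝ᵥ (P j *ᵥ u)) ≤ (m / C) * (u ⬝ᵥ (P j *ᵥ u)) :=
          mul_le_mul_of_nonneg_right (min_le_left _ _) hPu0
        have h2 : (m / C) * (u ⬝ᵥ (P j *ᵥ u)) ≤ (m / C) * C :=
          mul_le_mul_of_nonneg_left hPu (div_nonneg hmpos.le hCpos.le)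
        have h3 : (m / C) * C = m := div_mul_cancel₀ _ hCpos.ne'
        rw [hEq]
        linarith [hgu, hsplit]
      -- scale back to x
      rw [hxcu, Matrix.mulVec_smul, aux_quad_smul, aux_quad_smul]
      calc c ^ 2 * ((NormedSpace.exp (T • A i) *ᵥ u) ⬝ᵥ
              (P i *ᵥ (NormedSpace.exp (T • A i) *ᵥ u)))
          ≤ c ^ 2 * ((1 - min (m / C) (1/2)) * (u ⬝ᵥ (P j *ᵥ u))) :=
            mul_le_mul_of_nonneg_left hquadu (sq_nonneg c)
        _ = (1 - min (m / C) (1/2)) * (c ^ 2 * (u ⬝ᵥ (P j *ᵥ u))) := by ring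
  choose δ hδ0 hδ1 hδ using key
  set d : ℝ := Finset.univ.inf' Finset.univ_nonempty δ with hddef
  have hd0 : 0 < d := by
    rw [hddef, Finset.lt_inf'_iff]
    exact fun p _ => hδ0 p
  have hd1 : d < 1 := lt_of_le_of_lt (Finset.inf'_le _ (Finset.mem_univ (Classical.arbitrary _)))
    (hδ1 _)
  refine ⟨1 - d, ⟨by linarith, by linarith⟩, ?_⟩
  have hρ0 : (0:ℝ) ≤ 1 - d := by linarith
  have hρ1 : 1 - d < 1 := by linarith
  have hcontr : ∀ i j, i ≠ j → ∀ T ∈ Set.Icc (Tmin i) (Tmax i), ∀ x : Fin n → ℝ,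
      (NormedSpace.exp (T • A i) *ᵥ x) ⬝ᵥ (P i *ᵥ (NormedSpace.exp (T • A i) *ᵥ x))
        ≤ (1 - d) * (x ⬝ᵥ (P j *ᵥ x)) := by
    intro i j hij T hT x
    have h1 := hδ (i, j) hij T hT x
    have h2 : 0 ≤ x ⬝ᵥ (P j *ᵥ x) := by simpa using (hPpos j).posSemidef.dotProduct_mulVec_nonneg x
    have h3 : d ≤ δ (i, j) := Finset.inf'_le _ (Finset.mem_univ _)
    calc (NormedSpace.exp (T • A i) *ᵥ x) ⬝ᵥ (P i *ᵥ (NormedSpace.exp (T • A i) *ᵥ x))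
        ≤ (1 - δ (i, j)) * (x ⬝ᵥ (P j *ᵥ x)) := h1
      _ ≤ (1 - d) * (x ⬝ᵥ (P j *ᵥ x)) := mul_le_mul_of_nonneg_right (by linarith) h2
  refine ⟨hcontr, ?_⟩
  intro t ht0 htm htend ι hι hdwell x0 x hx00 hx
  have step : ∀ k, x (t (k+1)) = NormedSpace.exp ((t (k+1) - t k) • A (ι k)) *ᵥ x (t k) :=
    fun k => hx k (t (k+1)) ⟨(htm (Nat.lt_succ_self k)).le, le_rfl⟩
  have decay : ∀ k, x (t (k + 2)) ⬝ᵥ (P (ι (k + 1)) *ᵥ x (t (k + 2)))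
      ≤ (1 - d) * (x (t (k+1)) ⬝ᵥ (P (ι k) *ᵥ x (t (k+1)))) := by
    intro k
    have h2 : x (t (k+2)) =
        NormedSpace.exp ((t (k+2) - t (k+1)) • A (ι (k+1))) *ᵥ x (t (k+1)) := step (k+1)
    rw [h2]
    exact hcontr (ι (k+1)) (ι k) (hι k) _ (hdwell (k+1)) _
  refine ⟨decay, ?_⟩
  -- lower bound for the quadratic forms
  have key2 : ∀ i : Fin N, ∃ c : ℝ, 0 < c ∧ ∀ y : Fin n → ℝ,
      c * ‖y‖ ^ 2 ≤ y ⬝ᵥ (P i *ᵥ y) := by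
    intro i
    obtain ⟨u₀, hu₀S, hu₀⟩ := hSc.exists_isMinOn hSne (aux_continuous_quad (P i)).continuousOn
    have hu₀0 : u₀ ≠ 0 := by
      have h1 : ‖u₀‖ = 1 := (hSmem _).mp hu₀S
      intro h; rw [h] at h1; simp at h1
    refine ⟨u₀ ⬝ᵥ (P i *ᵥ u₀), by simpa using (hPpos i).dotProduct_mulVec_pos hu₀0, fun y => ?_⟩
    by_cases hy : y = 0
    · simp [hy]
    · set c : ℝ := ‖y‖ with hcdef
      have hc0 : c ≠ 0 := norm_ne_zero_iff.mpr hy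
      set u : Fin n → ℝ := c⁻¹ • y with hudef
      have huS : u ∈ S := by
        rw [hSmem, hudef, norm_smul, norm_inv, norm_norm, ← hcdef, inv_mul_cancel₀ hc0]
      have hycu : y = c • u := by rw [hudef, smul_inv_smul₀ hc0]
      have hmin : u₀ ⬝ᵥ (P i *ᵥ u₀) ≤ u ⬝ᵥ (P i *ᵥ u) := isMinOn_iff.mp hu₀ u huS
      have hqy : y ⬝ᵥ (P i *ᵥ y) = c ^ 2 * (u ⬝ᵥ (P i *ᵥ u)) := by
        conv_lhs => rw [hycu]
        rw [aux_quad_smul]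
      calc u₀ ⬝ᵥ (P i *ᵥ u₀) * c ^ 2 = c ^ 2 * (u₀ ⬝ᵥ (P i *ᵥ u₀)) := by ring
        _ ≤ c ^ 2 * (u ⬝ᵥ (P i *ᵥ u)) := mul_le_mul_of_nonneg_left hmin (sq_nonneg _)
        _ = y ⬝ᵥ (P i *ᵥ y) := hqy.symm
  choose cl hcl0 hcl using key2
  set c : ℝ := Finset.univ.inf' Finset.univ_nonempty cl with hcdef
  have hc0 : 0 < c := by
    rw [hcdef, Finset.lt_inf'_iff]; exact fun i _ => hcl0 i
  have hclow : ∀ i (y : Fin n → ℝ), c * ‖y‖ ^ 2 ≤ y ⬝ᵥ (P i *ᵥ y) := by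
    intro i y
    calc c * ‖y‖ ^ 2 ≤ cl i * ‖y‖ ^ 2 :=
          mul_le_mul_of_nonneg_right (Finset.inf'_le _ (Finset.mem_univ _)) (sq_nonneg _)
      _ ≤ y ⬝ᵥ (P i *ᵥ y) := hcl i y
  set V : ℕ → ℝ := fun k => x (t (k+1)) ⬝ᵥ (P (ι k) *ᵥ x (t (k+1))) with hVdef
  have hV0 : ∀ k, 0 ≤ V k := fun k => by simpa using (hPpos (ι k)).posSemidef.dotProduct_mulVec_nonneg (x (t (k+1)))
  have hVd : ∀ k, V (k+1) ≤ (1 - d) * V k := fun k => decay k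
  have geo : ∀ k, V k ≤ (1 - d)^k * V 0 := by
    intro k
    induction k with
    | zero => simp
    | succ k ih =>
      calc V (k+1) ≤ (1 - d) * V k := hVd k
        _ ≤ (1 - d) * ((1 - d)^k * V 0) := mul_le_mul_of_nonneg_left ih hρ0
        _ = (1 - d)^(k+1) * V 0 := by ring
  have hVlim : Tendsto V atTop (𝓝 0) := by
    apply squeeze_zero hV0 geo
    have := (tendsto_pow_atTop_nhds_zero_of_lt_one hρ0 hρ1).mul_const (V 0)
    simpa using this
  have hnorm : ∀ k, ‖x (t (k+1))‖ ^ 2 ≤ V k / c := by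
    intro k
    rw [le_div_iff₀ hc0, mul_comm]
    exact hclow (ι k) _
  have hn2 : Tendsto (fun k => ‖x (t (k+1))‖ ^ 2) atTop (𝓝 0) := by
    apply squeeze_zero (fun k => sq_nonneg _) hnorm
    simpa using hVlim.div_const c
  have hn1 : Tendsto (fun k => ‖x (t (k+1))‖) atTop (𝓝 0) := by
    have h := (Real.continuous_sqrt.tendsto 0).comp hn2
    have heq : (fun k => Real.sqrt (‖x (t (k+1))‖ ^ 2)) = fun k => ‖x (t (k+1))‖ :=
      funext fun k => Real.sqrt_sq (norm_nonneg _)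
    rw [Function.comp_def, heq] at h
    simpa using h
  have hx1 : Tendsto (fun k => x (t (k+1))) atTop (𝓝 0) := by
    rw [tendsto_zero_iff_norm_tendsto_zero]
    exact hn1
  exact (tendsto_add_atTop_iff_nat 1).mp hx1
end
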